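/- arXiv:1410.5143 — 3 statements merged into one kernel-verified Lean document; each statement's English description precedes it below -/
import Mathlib

section
/- Let X be an n×n complex matrix. Then det(I_n + X*X) ≥ det(I_n + conj(X)·X), where both sides are real (the right-hand side is a real number). -/
open Matrix Finset Equiv

variable {R : Type*} [CommRing R] {α : Type*} [Fintype α] [DecidableEq α]

private lemma prod_one_entries (s : Finset α) (σ : Equiv.Perm α) :
    (∏ i ∈ sᶜ, (1 : Matrix α α R) (σ i) i) =
      if ∀ i ∈ sᶜ, σ i = i then 1 else 0 := by
  split_ifs with h
  · rw [Finset.prod_congr rfl (fun i hi => ?_), Finset.prod_const_one]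
    rw [h i hi, Matrix.one_apply_eq]
  · push_neg at h
    obtain ⟨i, hi, hne⟩ := h
    exact Finset.prod_eq_zero hi (Matrix.one_apply_ne hne)

private lemma sum_perm_fixing (s : Finset α) (M : Matrix α α R) :
    (∑ σ ∈ Finset.univ.filter (fun σ : Equiv.Perm α => ∀ i ∈ sᶜ, σ i = i),
        ((Equiv.Perm.sign σ : ℤ) : R) * ∏ i ∈ s, M (σ i) i) =
      (M.submatrix (fun i : ↥s => (i : α)) (fun i : ↥s => (i : α))).det := by
  have key : ∀ σ : Equiv.Perm α, (∀ i ∈ sᶜ, σ i = i) → ∀ x, x ∈ s ↔ σ x ∈ s := by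
    intro σ h x
    constructor
    · intro hx
      by_contra hns
      have h1 : σ (σ x) = σ x := h (σ x) (by simpa using hns)
      have h2 : σ x = x := σ.injective h1
      exact hns (by rw [h2]; exact hx)
    · intro hx
      by_contra hns
      have h1 : σ x = x := h x (by simpa using hns)
      exact hns (by rwa [h1] at hx)
  rw [Matrix.det_apply']
  refine Finset.sum_bij' (fun σ hσ => σ.subtypePerm (fun x => (key σ (Finset.mem_filter.mp hσ).2 x).symm))
    (fun τ _ => Equiv.Perm.ofSubtype τ) ?_ ?_ ?_ ?_ ?_
  · intro σ hσ; exact Finset.mem_univ _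
  · intro τ _
    refine Finset.mem_filter.mpr ⟨Finset.mem_univ _, fun i hi => ?_⟩
    exact Equiv.Perm.ofSubtype_apply_of_not_mem τ (by simpa using hi)
  · intro σ hσ
    exact Equiv.Perm.ofSubtype_subtypePerm _
      (fun x hx => by_contra fun hns => hx ((Finset.mem_filter.mp hσ).2 x (by simpa using hns)))
  · intro τ _
    exact Equiv.Perm.subtypePerm_ofSubtype τ
  · intro σ hσ
    have hfix : ∀ x, σ x ≠ x → x ∈ s := fun x hx =>
      by_contra fun hns => hx ((Finset.mem_filter.mp hσ).2 x (by simpa using hns))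
    have hsgn : Equiv.Perm.sign (σ.subtypePerm (fun x => (key σ (Finset.mem_filter.mp hσ).2 x).symm)) =
        Equiv.Perm.sign σ := by
      have h0 := Equiv.Perm.sign_subtypePerm σ (fun x => (key σ (Finset.mem_filter.mp hσ).2 x).symm) hfix
      convert h0 using 3
    rw [hsgn]
    congr 1
    rw [← Finset.prod_coe_sort s (fun i => M (σ i) i)]
    exact Finset.prod_congr rfl fun i _ => rfl

private lemma det_one_add' (M : Matrix α α R) :
    (1 + M).det = ∑ s : Finset α,
      (M.submatrix (fun i : ↥s => (i : α)) (fun i : ↥s => (i : α))).det := by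
  rw [Matrix.det_apply']
  have h1 : ∀ σ : Equiv.Perm α, (∏ i, (1 + M) (σ i) i)
      = ∑ s : Finset α, (∏ i ∈ s, M (σ i) i) * ∏ i ∈ sᶜ, (1 : Matrix α α R) (σ i) i := by
    intro σ
    calc (∏ i, (1 + M) (σ i) i)
        = ∏ i, (M (σ i) i + (1 : Matrix α α R) (σ i) i) := by
          refine Finset.prod_congr rfl fun i _ => ?_
          rw [Matrix.add_apply, add_comm]
      _ = ∑ s ∈ (Finset.univ : Finset α).powerset,
            (∏ i ∈ s, M (σ i) i) * ∏ i ∈ Finset.univ \ s, (1 : Matrix α α R) (σ i) i :=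
          Finset.prod_add _ _ _
      _ = ∑ s : Finset α, (∏ i ∈ s, M (σ i) i) * ∏ i ∈ sᶜ, (1 : Matrix α α R) (σ i) i := by
          rw [Finset.powerset_univ]
          exact Finset.sum_congr rfl fun s _ => by rw [← Finset.compl_eq_univ_sdiff]
  simp_rw [h1, Finset.mul_sum]
  rw [Finset.sum_comm]
  refine Finset.sum_congr rfl fun s _ => ?_
  rw [← sum_perm_fixing, Finset.sum_filter]
  refine Finset.sum_congr rfl fun σ _ => ?_
  rw [prod_one_entries]
  split_ifs with h
  · ring
  · ring

open Matrix Finset Equiv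

variable {R : Type*} [CommRing R]

private lemma detE1 {k n : ℕ} (M : Matrix (Fin k) (Fin n) R) (N : Matrix (Fin n) (Fin k) R) :
    (M * N).det = ∑ p : Fin k → Fin n, (∏ i, N (p i) i) * (M.submatrix id p).det := by
  calc (M * N).det
      = ∑ σ : Equiv.Perm (Fin k), ((Equiv.Perm.sign σ : ℤ) : R) * ∏ i, ∑ c, M (σ i) c * N c i := by
        rw [Matrix.det_apply']
        simp only [Matrix.mul_apply]
    _ = ∑ σ : Equiv.Perm (Fin k), ((Equiv.Perm.sign σ : ℤ) : R) *
          ∑ p ∈ Fintype.piFinset (fun _ : Fin k => (Finset.univ : Finset (Fin n))),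
            ∏ i, M (σ i) (p i) * N (p i) i := by
        simp_rw [Finset.prod_univ_sum]
    _ = ∑ p : Fin k → Fin n, ∑ σ : Equiv.Perm (Fin k),
          ((Equiv.Perm.sign σ : ℤ) : R) * ∏ i, M (σ i) (p i) * N (p i) i := by
        simp_rw [Finset.mul_sum, Fintype.piFinset_univ]
        exact Finset.sum_comm
    _ = ∑ p : Fin k → Fin n, (∏ i, N (p i) i) * (M.submatrix id p).det := by
        refine Finset.sum_congr rfl fun p _ => ?_
        rw [Matrix.det_apply', Finset.mul_sum]
        refine Finset.sum_congr rfl fun σ _ => ?_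
        simp only [Matrix.submatrix_apply, id_eq, Finset.prod_mul_distrib]
        ring

private noncomputable def permOf {k n : ℕ} (p : Fin k → Fin n) (hp : Function.Injective p) :
    Equiv.Perm (Fin k) :=
  Equiv.ofBijective
    (fun x => ((Finset.univ.image p).orderIsoOfFin
      (by rw [Finset.card_image_of_injective _ hp, Finset.card_univ, Fintype.card_fin])).symm
      ⟨p x, Finset.mem_image_of_mem p (Finset.mem_univ x)⟩)
    (by
      rw [← Finite.injective_iff_bijective]
      intro a b hab
      apply hp
      have := congrArg (fun z => (((Finset.univ.image p).orderIsoOfFin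
        (by rw [Finset.card_image_of_injective _ hp, Finset.card_univ, Fintype.card_fin])) z : Fin n)) hab
      simpa using this)

private lemma permOf_spec {k n : ℕ} (p : Fin k → Fin n) (hp : Function.Injective p)
    (h : (Finset.univ.image p).card = k) (x : Fin k) :
    (Finset.univ.image p).orderEmbOfFin h (permOf p hp x) = p x := by
  rw [← Finset.coe_orderIsoOfFin_apply]
  show (((Finset.univ.image p).orderIsoOfFin h) ((((Finset.univ.image p)).orderIsoOfFin h).symm
    ⟨p x, Finset.mem_image_of_mem p (Finset.mem_univ x)⟩) : Fin n) = p x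
  rw [OrderIso.apply_symm_apply]

private lemma orderEmbOfFin_congr {α : Type*} [LinearOrder α] {s t : Finset α} {k : ℕ}
    (hst : s = t) (h : s.card = k) (x : Fin k) :
    s.orderEmbOfFin h x = t.orderEmbOfFin (hst ▸ h) x := by subst hst; rfl

private lemma sum_inj_group {k n : ℕ} (G : (Fin k → Fin n) → R)
    (hG : ∀ p, ¬Function.Injective p → G p = 0) :
    (∑ p : Fin k → Fin n, G p)
      = ∑ t : Finset (Fin n),
          if h : t.card = k then ∑ σ : Equiv.Perm (Fin k), G (t.orderEmbOfFin h ∘ σ) else 0 := by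
  classical
  have h1 : (∑ p : Fin k → Fin n, G p)
      = ∑ p ∈ Finset.univ.filter (fun p : Fin k → Fin n => Function.Injective p), G p :=
    (Finset.sum_filter_of_ne (fun p _ hGp => by_contra fun hni => hGp (hG p hni))).symm
  have h2 : (∑ t : Finset (Fin n),
        if h : t.card = k then ∑ σ : Equiv.Perm (Fin k), G (t.orderEmbOfFin h ∘ σ) else 0)
      = ∑ t ∈ Finset.univ.filter (fun t : Finset (Fin n) => t.card = k),
          if h : t.card = k then ∑ σ : Equiv.Perm (Fin k), G (t.orderEmbOfFin h ∘ σ) else 0 :=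
    (Finset.sum_filter_of_ne (fun t _ hGt => by_contra fun hnc => hGt (dif_neg hnc))).symm
  have h3 : ∀ t ∈ Finset.univ.filter (fun t : Finset (Fin n) => t.card = k),
      (if h : t.card = k then ∑ σ : Equiv.Perm (Fin k), G (t.orderEmbOfFin h ∘ σ) else 0)
        = ∑ σ ∈ (Finset.univ : Finset (Equiv.Perm (Fin k))),
            (if h : t.card = k then G (t.orderEmbOfFin h ∘ σ) else 0) := by
    intro t ht
    rw [dif_pos (Finset.mem_filter.mp ht).2]
    exact Finset.sum_congr rfl fun σ _ => by rw [dif_pos (Finset.mem_filter.mp ht).2]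
  rw [h1, h2, Finset.sum_congr rfl h3, Finset.sum_sigma']
  refine Finset.sum_bij'
    (fun p hp => ⟨Finset.univ.image p, permOf p (Finset.mem_filter.mp hp).2⟩)
    (fun x hx => x.1.orderEmbOfFin (Finset.mem_filter.mp (Finset.mem_sigma.mp hx).1).2 ∘ x.2)
    (g := fun x : Σ _ : Finset (Fin n), Equiv.Perm (Fin k) =>
      if h : x.1.card = k then G (x.1.orderEmbOfFin h ∘ x.2) else 0)
    ?_ ?_ ?_ ?_ ?_
  · intro p hp
    refine Finset.mem_sigma.mpr ⟨Finset.mem_filter.mpr ⟨Finset.mem_univ _, ?_⟩, Finset.mem_univ _⟩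
    rw [Finset.card_image_of_injective _ (Finset.mem_filter.mp hp).2, Finset.card_univ,
      Fintype.card_fin]
  · intro x hx
    exact Finset.mem_filter.mpr ⟨Finset.mem_univ _,
      (x.1.orderEmbOfFin _).injective.comp x.2.injective⟩
  · -- left_inv : j (i p) = p
    intro p hp
    funext x
    exact permOf_spec p (Finset.mem_filter.mp hp).2 _ x
  · -- right_inv : i (j x) = x
    rintro ⟨t, σ⟩ hx
    have hcard : t.card = k := (Finset.mem_filter.mp (Finset.mem_sigma.mp hx).1).2
    set q : Fin k → Fin n := t.orderEmbOfFin hcard ∘ σ with hq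
    have hqinj : Function.Injective q := (t.orderEmbOfFin _).injective.comp σ.injective
    have ht' : Finset.univ.image q = t := by
      ext y
      simp only [Finset.mem_image, Finset.mem_univ, true_and, hq, Function.comp_apply]
      constructor
      · rintro ⟨x, rfl⟩
        exact Finset.orderEmbOfFin_mem t hcard (σ x)
      · intro hy
        have : y ∈ Set.range (t.orderEmbOfFin hcard) := by
          rw [Finset.range_orderEmbOfFin]; exact hy
        obtain ⟨i, hi⟩ := this
        exact ⟨σ.symm i, by simp [hi]⟩
    have hcard' : (Finset.univ.image q).card = k := by rw [ht']; exact hcard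
    refine Sigma.ext ht' (heq_of_eq ?_)
    refine Equiv.ext fun x => ?_
    apply ((Finset.univ.image q).orderEmbOfFin hcard').injective
    rw [permOf_spec q hqinj hcard' x]
    rw [orderEmbOfFin_congr ht' hcard' (σ x)]
    rfl
  · intro p hp
    dsimp only
    have hc : (Finset.univ.image p).card = k := by
      rw [Finset.card_image_of_injective _ (Finset.mem_filter.mp hp).2, Finset.card_univ,
        Fintype.card_fin]
    rw [dif_pos hc]
    congr 1
    funext x
    exact (permOf_spec p (Finset.mem_filter.mp hp).2 hc x).symm
open Matrix Finset Equiv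
variable {R : Type*} [CommRing R]

private lemma orderEmbOfFin_cast {α : Type*} [LinearOrder α] {s : Finset α} {k : ℕ}
    (h : s.card = k) (x : Fin k) :
    s.orderEmbOfFin h x = s.orderEmbOfFin rfl (Fin.cast h.symm x) := by subst h; rfl

private noncomputable def cm {n : ℕ} (A : Matrix (Fin n) (Fin n) R) (s t : Finset (Fin n)) : R :=
  if h : t.card = s.card then (A.submatrix (s.orderEmbOfFin rfl) (t.orderEmbOfFin h)).det else 0

private lemma cm_cast {n : ℕ} (A : Matrix (Fin n) (Fin n) R) {s t : Finset (Fin n)}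
    (h : t.card = s.card) :
    cm A t s = (A.submatrix (t.orderEmbOfFin h) (s.orderEmbOfFin rfl)).det := by
  rw [cm, dif_pos h.symm]
  have key : A.submatrix (t.orderEmbOfFin rfl) (s.orderEmbOfFin h.symm)
      = (A.submatrix (t.orderEmbOfFin h) (s.orderEmbOfFin rfl)).submatrix
          (finCongr h) (finCongr h) := by
    ext i j
    simp only [Matrix.submatrix_apply]
    rw [orderEmbOfFin_cast h (finCongr h i), orderEmbOfFin_cast h.symm j]
    congr 1 <;> exact congrArg _ (Fin.ext (by simp))
  rw [key, Matrix.det_submatrix_equiv_self]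

private lemma lemG {n : ℕ} (A B : Matrix (Fin n) (Fin n) R) :
    (1 + A * B).det = ∑ s : Finset (Fin n), ∑ t : Finset (Fin n), cm A s t * cm B t s := by
  rw [det_one_add']
  refine Finset.sum_congr rfl fun s _ => ?_
  set f := s.orderEmbOfFin (rfl : s.card = s.card) with hf
  have h0 : ((A * B).submatrix (fun i : ↥s => (i : Fin n)) (fun i : ↥s => (i : Fin n))).det
      = ((A * B).submatrix f f).det := by
    rw [← Matrix.det_submatrix_equiv_self (s.orderIsoOfFin rfl).toEquiv
      ((A * B).submatrix (fun i : ↥s => (i : Fin n)) (fun i : ↥s => (i : Fin n)))]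
    congr 1
  rw [h0,
    Matrix.submatrix_mul A B f id f Function.bijective_id, detE1,
    sum_inj_group _ (fun p hp => ?_)]
  · refine Finset.sum_congr rfl fun t _ => ?_
    by_cases h : t.card = s.card
    · rw [dif_pos h]
      set g := t.orderEmbOfFin h with hg
      have hsub : ∀ σ : Equiv.Perm (Fin s.card),
          (A.submatrix f id).submatrix id (g ∘ σ) = (A.submatrix f g).submatrix id σ := by
        intro σ; ext i j; simp
      have hdet : ∀ σ : Equiv.Perm (Fin s.card),
          ((A.submatrix f id).submatrix id (g ∘ σ)).det
            = ((Equiv.Perm.sign σ : ℤ) : R) * (A.submatrix f g).det := by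
        intro σ
        rw [hsub σ, Matrix.det_permute']
      calc (∑ σ : Equiv.Perm (Fin s.card),
              (∏ i, B.submatrix id f ((g ∘ σ) i) i) * ((A.submatrix f id).submatrix id (g ∘ σ)).det)
          = (A.submatrix f g).det * ∑ σ : Equiv.Perm (Fin s.card),
              ((Equiv.Perm.sign σ : ℤ) : R) * ∏ i, (B.submatrix g f) (σ i) i := by
            rw [Finset.mul_sum]
            refine Finset.sum_congr rfl fun σ _ => ?_
            rw [hdet σ]
            simp only [Matrix.submatrix_apply, Function.comp_apply, id_eq]
            ring
        _ = cm A s t * cm B t s := by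
            rw [← Matrix.det_apply', cm, dif_pos h, cm_cast B h]
    · rw [dif_neg h, cm, dif_neg h, zero_mul]
  · -- vanishing for non-injective p
    rw [Function.not_injective_iff] at hp
    obtain ⟨i, j, hij, hne⟩ := hp
    rw [Matrix.det_zero_of_column_eq hne (fun r => by simp [hij]), mul_zero]

private lemma pt_ineq (u v : ℂ) :
    ((starRingEnd ℂ) u * v).re ≤ (((starRingEnd ℂ) u * u).re + ((starRingEnd ℂ) v * v).re) / 2 := by
  simp only [Complex.mul_re, Complex.conj_re, Complex.conj_im]
  nlinarith [sq_nonneg (u.re - v.re), sq_nonneg (u.im - v.im)]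

theorem stmt_5 (n : ℕ) (X : Matrix (Fin n) (Fin n) ℂ) :
    ((1 + X.map (starRingEnd ℂ) * X).det).im = 0 ∧
      ((1 + Xᴴ * X).det).re ≥ ((1 + X.map (starRingEnd ℂ) * X).det).re := by
  classical
  have hA : ∀ s t : Finset (Fin n), cm (X.map (starRingEnd ℂ)) s t
      = (starRingEnd ℂ) (cm X s t) := by
    intro s t
    rw [cm, cm]
    split_ifs with h
    · rw [Matrix.submatrix_map]
      have := (RingHom.map_det (starRingEnd ℂ)
        (X.submatrix (s.orderEmbOfFin rfl) (t.orderEmbOfFin h))).symm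
      simpa [RingHom.mapMatrix_apply] using this
    · rw [map_zero]
  have hH : ∀ s t : Finset (Fin n), cm Xᴴ s t = (starRingEnd ℂ) (cm X t s) := by
    intro s t
    rw [cm]
    split_ifs with h
    · rw [← Matrix.conjTranspose_submatrix, Matrix.det_conjTranspose, cm_cast X h]
      rfl
    · rw [cm, dif_neg (fun hc => h hc.symm), map_zero]
  have hz : (1 + X.map (starRingEnd ℂ) * X).det
      = ∑ s : Finset (Fin n), ∑ t : Finset (Fin n), (starRingEnd ℂ) (cm X s t) * cm X t s := by
    rw [lemG]
    exact Finset.sum_congr rfl fun s _ => Finset.sum_congr rfl fun t _ => by rw [hA]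
  have hw : (1 + Xᴴ * X).det
      = ∑ s : Finset (Fin n), ∑ t : Finset (Fin n), (starRingEnd ℂ) (cm X t s) * cm X t s := by
    rw [lemG]
    exact Finset.sum_congr rfl fun s _ => Finset.sum_congr rfl fun t _ => by rw [hH]
  set a : Finset (Fin n) → Finset (Fin n) → ℂ := fun s t => cm X s t with ha
  constructor
  · rw [← Complex.conj_eq_iff_im, hz]
    calc (starRingEnd ℂ) (∑ s : Finset (Fin n), ∑ t : Finset (Fin n),
            (starRingEnd ℂ) (a s t) * a t s)
        = ∑ s : Finset (Fin n), ∑ t : Finset (Fin n), a s t * (starRingEnd ℂ) (a t s) := by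
          rw [map_sum]
          refine Finset.sum_congr rfl fun s _ => ?_
          rw [map_sum]
          refine Finset.sum_congr rfl fun t _ => ?_
          rw [_root_.map_mul]
          simp [mul_comm]
      _ = ∑ t : Finset (Fin n), ∑ s : Finset (Fin n), a s t * (starRingEnd ℂ) (a t s) :=
          Finset.sum_comm
      _ = ∑ s : Finset (Fin n), ∑ t : Finset (Fin n), (starRingEnd ℂ) (a s t) * a t s := by
          refine Finset.sum_congr rfl fun t _ => Finset.sum_congr rfl fun s _ => ?_
          rw [mul_comm]
  · rw [ge_iff_le, hz, hw]
    simp only [Complex.re_sum]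
    have hcomm : (∑ s : Finset (Fin n), ∑ t : Finset (Fin n),
          ((starRingEnd ℂ) (a s t) * a s t).re)
        = ∑ s : Finset (Fin n), ∑ t : Finset (Fin n), ((starRingEnd ℂ) (a t s) * a t s).re :=
      Finset.sum_comm
    calc (∑ s : Finset (Fin n), ∑ t : Finset (Fin n), ((starRingEnd ℂ) (a s t) * a t s).re)
        ≤ ∑ s : Finset (Fin n), ∑ t : Finset (Fin n),
            (((starRingEnd ℂ) (a s t) * a s t).re + ((starRingEnd ℂ) (a t s) * a t s).re) / 2 :=
          Finset.sum_le_sum fun s _ => Finset.sum_le_sum fun t _ => pt_ineq _ _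
      _ = ∑ s : Finset (Fin n), ∑ t : Finset (Fin n), ((starRingEnd ℂ) (a t s) * a t s).re := by
          simp_rw [add_div, Finset.sum_add_distrib]
          have hcomm2 : (∑ s : Finset (Fin n), ∑ t : Finset (Fin n),
                ((starRingEnd ℂ) (a s t) * a s t).re / 2)
              = ∑ s : Finset (Fin n), ∑ t : Finset (Fin n),
                ((starRingEnd ℂ) (a t s) * a t s).re / 2 := Finset.sum_comm
          rw [hcomm2]
          simp_rw [← Finset.sum_add_distrib, add_halves]
end

section
/- Let X be an n×n complex matrix. Then det(I_n + X*X) = det(I_n + conj(X)·X) if and only if X is symmetric (X equals its transpose). -/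
set_option linter.unusedSectionVars false

open Matrix Finset

namespace Stmt6Aux

variable {n : ℕ} {κ : Type*} [Fintype κ] [DecidableEq κ]

lemma step1 (C D : Matrix κ (Fin n) ℂ) :
    (Cᴴ * D).det =
      ∑ f : Fin n → κ,
        (starRingEnd ℂ) ((C.submatrix f id).det) * ∏ i, D (f i) i := by
  rw [Matrix.det_apply']
  have key : ∀ σ : Equiv.Perm (Fin n),
      (∏ i, (Cᴴ * D) (σ i) i)
        = ∑ f : Fin n → κ,
            (∏ i, (starRingEnd ℂ) (C (f i) (σ i))) * ∏ i, D (f i) i := by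
    intro σ
    calc ∏ i, (Cᴴ * D) (σ i) i
        = ∏ i, ∑ j, (starRingEnd ℂ) (C j (σ i)) * D j i := by
          simp [Matrix.mul_apply, Matrix.conjTranspose_apply]
      _ = ∑ f ∈ Fintype.piFinset (fun _ : Fin n => (univ : Finset κ)),
            ∏ i, (starRingEnd ℂ) (C (f i) (σ i)) * D (f i) i := by
          rw [Finset.prod_univ_sum]
      _ = ∑ f : Fin n → κ, (∏ i, (starRingEnd ℂ) (C (f i) (σ i))) * ∏ i, D (f i) i := by
          rw [Fintype.piFinset_univ]
          exact Finset.sum_congr rfl fun f _ => by rw [Finset.prod_mul_distrib]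
  simp_rw [key, Finset.mul_sum]
  rw [Finset.sum_comm]
  refine Finset.sum_congr rfl fun f _ => ?_
  have h1 : (starRingEnd ℂ) ((C.submatrix f id).det) = det ((C.submatrix f id)ᴴ) := by
    rw [Matrix.det_conjTranspose]; rfl
  rw [h1, Matrix.det_apply', Finset.sum_mul]
  refine Finset.sum_congr rfl fun σ _ => ?_
  simp only [Matrix.conjTranspose_apply, Matrix.submatrix_apply, id_eq, starRingEnd_apply]
  ring

lemma main_aux (C D : Matrix κ (Fin n) ℂ) (τ : Equiv.Perm (Fin n)) :
      (∑ f : Fin n → κ,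
        (starRingEnd ℂ) ((C.submatrix f id).det) * ∏ i, D (f i) i)
      = ∑ f : Fin n → κ,
        (starRingEnd ℂ) ((C.submatrix f id).det)
          * (((Equiv.Perm.sign τ : ℤ) : ℂ) * ∏ i, D (f (τ i)) i) := by
  rw [← Equiv.sum_comp (Equiv.arrowCongr τ (Equiv.refl κ))
    (fun f => (starRingEnd ℂ) ((C.submatrix f id).det)
        * (((Equiv.Perm.sign τ : ℤ) : ℂ) * ∏ i, D (f (τ i)) i))]
  refine Finset.sum_congr rfl fun g _ => ?_
  have hfun : ((Equiv.arrowCongr τ (Equiv.refl κ)) g) = g ∘ ⇑τ.symm := by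
    funext x; simp
  simp only [hfun]
  have hsub : C.submatrix (g ∘ ⇑τ.symm) id
      = (C.submatrix g id).submatrix (⇑τ.symm) id := by
    ext a b; simp
  have hprod : (∏ i, D ((g ∘ ⇑τ.symm) (τ i)) i) = ∏ i, D (g i) i :=
    Finset.prod_congr rfl fun i _ => by simp
  rw [hsub, Matrix.det_permute, _root_.map_mul, hprod]
  have hsign : (starRingEnd ℂ) (((Equiv.Perm.sign τ.symm : ℤ) : ℂ))
      = ((Equiv.Perm.sign τ : ℤ) : ℂ) := by
    rw [Equiv.Perm.sign_symm]
    exact map_intCast _ _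
  rw [hsign]
  have hs2 : ((Equiv.Perm.sign τ : ℤ) : ℂ) * ((Equiv.Perm.sign τ : ℤ) : ℂ) = 1 := by
    rcases Int.units_eq_one_or (Equiv.Perm.sign τ) with h | h <;> rw [h] <;> norm_num
  linear_combination (-((starRingEnd ℂ) ((C.submatrix g id).det) * ∏ i, D (g i) i)) * hs2

lemma cb (C D : Matrix κ (Fin n) ℂ) :
    ((n.factorial : ℕ) : ℂ) * (Cᴴ * D).det =
      ∑ f : Fin n → κ,
        (starRingEnd ℂ) ((C.submatrix f id).det) * (D.submatrix f id).det := by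
  calc ((n.factorial : ℕ) : ℂ) * (Cᴴ * D).det
      = ∑ _τ : Equiv.Perm (Fin n), (Cᴴ * D).det := by
        rw [Finset.sum_const, card_univ, Fintype.card_perm, Fintype.card_fin, nsmul_eq_mul]
    _ = ∑ τ : Equiv.Perm (Fin n), ∑ f : Fin n → κ,
          (starRingEnd ℂ) ((C.submatrix f id).det)
            * (((Equiv.Perm.sign τ : ℤ) : ℂ) * ∏ i, D (f (τ i)) i) := by
        refine Finset.sum_congr rfl fun τ _ => ?_
        rw [step1, main_aux C D τ]
    _ = ∑ f : Fin n → κ, ∑ τ : Equiv.Perm (Fin n),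
          (starRingEnd ℂ) ((C.submatrix f id).det)
            * (((Equiv.Perm.sign τ : ℤ) : ℂ) * ∏ i, D (f (τ i)) i) := by exact Finset.sum_comm
    _ = ∑ f : Fin n → κ,
          (starRingEnd ℂ) ((C.submatrix f id).det) * (D.submatrix f id).det := by
        refine Finset.sum_congr rfl fun f _ => ?_
        have hdet : (D.submatrix f id).det
            = ∑ τ : Equiv.Perm (Fin n), ((Equiv.Perm.sign τ : ℤ) : ℂ) * ∏ i, D (f (τ i)) i := by
          simp [Matrix.det_apply']
        rw [hdet, Finset.mul_sum]

lemma det_updateRow_one {m : ℕ} (i : Fin m) (r : Fin m → ℂ) :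
    ((1 : Matrix (Fin m) (Fin m) ℂ).updateRow i r).det = r i := by
  have h : (1 : Matrix (Fin m) (Fin m) ℂ).updateRow i r
      = ((1 : Matrix (Fin m) (Fin m) ℂ).updateCol i r)ᵀ := by
    ext a b
    by_cases hai : a = i <;>
      simp [Matrix.updateRow_apply, Matrix.updateCol_apply, Matrix.one_apply, hai, eq_comm]
  rw [h, Matrix.det_transpose, ← Matrix.cramer_apply, Matrix.cramer_one]
  rfl

end Stmt6Aux

open Stmt6Aux in
theorem stmt_6 (n : ℕ) (X : Matrix (Fin n) (Fin n) ℂ) :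
    (1 + Xᴴ * X).det = (1 + X.map (starRingEnd ℂ) * X).det ↔ X = Xᵀ := by
  constructor
  · intro h
    set A : Matrix (Fin n ⊕ Fin n) (Fin n) ℂ := fromRows Xᵀ 1 with hA
    set B : Matrix (Fin n ⊕ Fin n) (Fin n) ℂ := fromRows X 1 with hB
    have hXtH : (Xᵀ)ᴴ = X.map (starRingEnd ℂ) := by
      ext a b; simp [Matrix.conjTranspose_apply, Matrix.map_apply]
    have hBB : Bᴴ * B = 1 + Xᴴ * X := by
      rw [hB, Matrix.conjTranspose_fromRows_eq_fromCols_conjTranspose,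
        Matrix.fromCols_mul_fromRows]
      simp [add_comm]
    have hAB : Aᴴ * B = 1 + X.map (starRingEnd ℂ) * X := by
      rw [hA, hB, Matrix.conjTranspose_fromRows_eq_fromCols_conjTranspose,
        Matrix.fromCols_mul_fromRows, hXtH]
      simp [add_comm]
    have hAA : Aᴴ * A = 1 + X.map (starRingEnd ℂ) * Xᵀ := by
      rw [hA, Matrix.conjTranspose_fromRows_eq_fromCols_conjTranspose,
        Matrix.fromCols_mul_fromRows, hXtH]
      simp [add_comm]
    have hdetAA : (1 + X.map (starRingEnd ℂ) * Xᵀ).det = (1 + Xᴴ * X).det := by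
      have hmat : (1 + Xᵀ * X.map (starRingEnd ℂ))ᵀ = 1 + Xᴴ * X := by
        ext a b
        simp only [Matrix.transpose_apply, Matrix.add_apply, Matrix.mul_apply,
          Matrix.conjTranspose_apply, Matrix.map_apply, Matrix.one_apply, eq_comm]
        have : ∀ x, X x b * (starRingEnd ℂ) (X x a) = (starRingEnd ℂ) (X x a) * X x b :=
          fun x => mul_comm _ _
        rw [Finset.sum_congr rfl fun x _ => this x]
        simp only [starRingEnd_apply]
      rw [Matrix.det_one_add_mul_comm, ← Matrix.det_transpose, hmat]
    set u : (Fin n → Fin n ⊕ Fin n) → ℂ := fun f => (A.submatrix f id).det with hu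
    set w : (Fin n → Fin n ⊕ Fin n) → ℂ := fun f => (B.submatrix f id).det with hw
    have hcbBB := cb B B
    have hcbAB := cb A B
    have hcbAA := cb A A
    rw [hBB] at hcbBB
    rw [hAB] at hcbAB
    rw [hAA] at hcbAA
    -- everything equals ∑ conj(w f) * w f
    have hS1 : (∑ f : Fin n → Fin n ⊕ Fin n, (starRingEnd ℂ) (u f) * w f)
        = ∑ f : Fin n → Fin n ⊕ Fin n, (starRingEnd ℂ) (w f) * w f := by
      rw [← hcbAB, ← hcbBB, h]
    have hS2 : (∑ f : Fin n → Fin n ⊕ Fin n, (starRingEnd ℂ) (u f) * u f)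
        = ∑ f : Fin n → Fin n ⊕ Fin n, (starRingEnd ℂ) (w f) * w f := by
      rw [← hcbAA, ← hcbBB, hdetAA]
    have hS1' : (∑ f : Fin n → Fin n ⊕ Fin n, (starRingEnd ℂ) (w f) * u f)
        = ∑ f : Fin n → Fin n ⊕ Fin n, (starRingEnd ℂ) (w f) * w f := by
      have := congrArg (starRingEnd ℂ) hS1
      rw [map_sum, map_sum] at this
      simp only [_root_.map_mul, Complex.conj_conj] at this
      calc (∑ f : Fin n → Fin n ⊕ Fin n, (starRingEnd ℂ) (w f) * u f)
          = ∑ f : Fin n → Fin n ⊕ Fin n, u f * (starRingEnd ℂ) (w f) := by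
            exact Finset.sum_congr rfl fun f _ => mul_comm _ _
        _ = ∑ f : Fin n → Fin n ⊕ Fin n, w f * (starRingEnd ℂ) (w f) := this
        _ = ∑ f : Fin n → Fin n ⊕ Fin n, (starRingEnd ℂ) (w f) * w f := by
            exact Finset.sum_congr rfl fun f _ => mul_comm _ _
    have hzero : (∑ f : Fin n → Fin n ⊕ Fin n, Complex.normSq (u f - w f)) = 0 := by
      have hc : ((∑ f : Fin n → Fin n ⊕ Fin n, Complex.normSq (u f - w f) : ℝ) : ℂ) = 0 := by
        push_cast
        have : ∀ f : Fin n → Fin n ⊕ Fin n,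
            ((Complex.normSq (u f - w f) : ℝ) : ℂ)
              = (starRingEnd ℂ) (u f) * u f - (starRingEnd ℂ) (u f) * w f
                - (starRingEnd ℂ) (w f) * u f + (starRingEnd ℂ) (w f) * w f := by
          intro f
          rw [Complex.normSq_eq_conj_mul_self]
          simp only [map_sub]
          ring
        rw [Finset.sum_congr rfl fun f _ => this f]
        simp only [Finset.sum_add_distrib, Finset.sum_sub_distrib]
        rw [hS1, hS2, hS1']
        ring
      exact_mod_cast hc
    have heq : ∀ f : Fin n → Fin n ⊕ Fin n, u f = w f := by
      intro f
      have h0 : Complex.normSq (u f - w f) = 0 := by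
        have hnn : ∀ g ∈ (univ : Finset (Fin n → Fin n ⊕ Fin n)),
            0 ≤ Complex.normSq (u g - w g) := fun g _ => Complex.normSq_nonneg _
        exact (Finset.sum_eq_zero_iff_of_nonneg hnn).mp hzero f (Finset.mem_univ f)
      exact sub_eq_zero.mp (Complex.normSq_eq_zero.mp h0)
    ext i j
    set f : Fin n → Fin n ⊕ Fin n := fun k => if k = i then Sum.inl j else Sum.inr k with hf
    have hBsub : B.submatrix f id
        = (1 : Matrix (Fin n) (Fin n) ℂ).updateRow i (fun c => X j c) := by
      ext a b
      by_cases hai : a = i <;>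
        simp [hf, hai, hB, Matrix.updateRow_apply, Matrix.submatrix_apply,
          Matrix.fromRows_apply_inl, Matrix.fromRows_apply_inr]
    have hAsub : A.submatrix f id
        = (1 : Matrix (Fin n) (Fin n) ℂ).updateRow i (fun c => Xᵀ j c) := by
      ext a b
      by_cases hai : a = i <;>
        simp [hf, hai, hA, Matrix.updateRow_apply, Matrix.submatrix_apply,
          Matrix.fromRows_apply_inl, Matrix.fromRows_apply_inr]
    have h1 : w f = X j i := by
      show (B.submatrix f id).det = X j i
      rw [hBsub, det_updateRow_one]
    have h2 : u f = X i j := by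
      show (A.submatrix f id).det = X i j
      rw [hAsub, det_updateRow_one, Matrix.transpose_apply]
    have hfin := heq f
    rw [h1, h2] at hfin
    rw [Matrix.transpose_apply]
    exact hfin
  · intro h
    have hH : Xᴴ = X.map (starRingEnd ℂ) := by
      ext a b
      have hba : X b a = X a b := by
        conv_lhs => rw [h, Matrix.transpose_apply]
      simp [Matrix.conjTranspose_apply, Matrix.map_apply, hba]
    rw [hH]
end

section
/- Let T = [[X, Y], [0, Z]] be an n×n complex block upper triangular matrix with X of size r×r and Z of size (n−r)×(n−r), and let p ≥ 1 be real. Then det(I_n + |T|^p) ≥ det(I_r + |X|^p) · det(I_{n−r} + |Z|^p), where |A| = (A*A)^{1/2} is the positive semidefinite absolute value of A. -/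
open Matrix
open scoped ComplexOrder

/-- `|A|^p`: the `p`-th power (spectral functional calculus) of the positive semidefinite
absolute value `|A| = (AᴴA)^{1/2}` of a square complex matrix `A`. -/
noncomputable def absPow {n : Type*} [Fintype n] [DecidableEq n]
    (A : Matrix n n ℂ) (p : ℝ) : Matrix n n ℂ :=
  (Matrix.posSemidef_conjTranspose_mul_self A).1.cfc (fun x => Real.sqrt x ^ p)

namespace StmtAux
set_option linter.unusedSectionVars false
open Finset

section scalarpart


noncomputable def gfun (p x : ℝ) : ℝ := Real.log (1 + Real.exp (p * x))
noncomputable def phi (p x : ℝ) : ℝ := p * Real.exp (p * x) / (1 + Real.exp (p * x))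

theorem one_add_exp_pos (y : ℝ) : (0:ℝ) < 1 + Real.exp y :=
  lt_trans one_pos (by linarith [Real.exp_pos y])

theorem phi_nonneg {p : ℝ} (hp : 0 ≤ p) (x : ℝ) : 0 ≤ phi p x := by
  unfold phi
  positivity

theorem phi_mono {p : ℝ} (hp : 0 ≤ p) : Monotone (phi p) := by
  intro x y hxy
  unfold phi
  set u := Real.exp (p * x) with hu
  set v := Real.exp (p * y) with hv
  have huv : u ≤ v := Real.exp_le_exp.mpr (mul_le_mul_of_nonneg_left hxy hp)
  have hu0 : 0 < u := Real.exp_pos _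
  have hv0 : 0 < v := Real.exp_pos _
  rw [div_le_div_iff₀ (one_add_exp_pos _) (one_add_exp_pos _)]
  nlinarith

theorem gfun_hasDeriv (p x : ℝ) : HasDerivAt (gfun p) (phi p x) x := by
  have h1 : HasDerivAt (fun z : ℝ => 1 + Real.exp (p * z)) (Real.exp (p * x) * p) x := by
    have h2 : HasDerivAt (fun z : ℝ => p * z) p x := by
      simpa using (hasDerivAt_id x).const_mul p
    exact ((Real.hasDerivAt_exp (p * x)).comp x h2).const_add 1
  have h3 := (h1.log (ne_of_gt (one_add_exp_pos _)))
  have : Real.exp (p * x) * p / (1 + Real.exp (p * x)) = phi p x := by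
    unfold phi; ring
  rw [this] at h3
  exact h3

theorem tangent {p : ℝ} (hp : 0 ≤ p) (x y : ℝ) :
    phi p x * (y - x) ≤ gfun p y - gfun p x := by
  rcases lt_trichotomy x y with h | h | h
  · obtain ⟨c, hc, hceq⟩ := exists_hasDerivAt_eq_slope (gfun p) (phi p) h
      (fun z _ => (gfun_hasDeriv p z).continuousAt.continuousWithinAt)
      (fun z _ => gfun_hasDeriv p z)
    have h1 : phi p x ≤ phi p c := phi_mono hp (le_of_lt hc.1)
    have h2 : 0 < y - x := by linarith
    have := mul_le_mul_of_nonneg_right h1 (le_of_lt h2)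
    rw [hceq] at this
    calc phi p x * (y - x) ≤ (gfun p y - gfun p x) / (y - x) * (y - x) := this
      _ = gfun p y - gfun p x := div_mul_cancel₀ _ (ne_of_gt h2)
  · simp [h]
  · obtain ⟨c, hc, hceq⟩ := exists_hasDerivAt_eq_slope (gfun p) (phi p) h
      (fun z _ => (gfun_hasDeriv p z).continuousAt.continuousWithinAt)
      (fun z _ => gfun_hasDeriv p z)
    have h1 : phi p c ≤ phi p x := phi_mono hp (le_of_lt hc.2)
    have h2 : y - x < 0 := by linarith
    have h3 := mul_le_mul_of_nonpos_right h1 (le_of_lt h2)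
    have h4 : phi p c * (y - x) = gfun p y - gfun p x := by
      rw [hceq, div_mul_eq_mul_div, div_eq_iff (by linarith : x - y ≠ 0)]
      ring
    linarith

theorem abel (c d : ℕ → ℝ) (hc : Antitone c) (m : ℕ)
    (hd : ∀ k ≤ m, 0 ≤ ∑ i ∈ range k, d i) :
    c m * ∑ i ∈ range m, d i ≤ ∑ i ∈ range m, c i * d i := by
  induction m with
  | zero => simp
  | succ n ih =>
    have hd' : ∀ k ≤ n, 0 ≤ ∑ i ∈ range k, d i := fun k hk => hd k (le_trans hk (Nat.le_succ n))
    have h1 := ih hd'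
    rw [Finset.sum_range_succ, Finset.sum_range_succ]
    have h2 : c (n+1) * (∑ i ∈ range n, d i + d n) ≤ c n * (∑ i ∈ range n, d i + d n) := by
      rcases le_or_gt 0 (∑ i ∈ range n, d i + d n) with h | h
      · exact mul_le_mul_of_nonneg_right (hc (Nat.le_succ n)) h
      · exfalso
        have := hd (n+1) le_rfl
        rw [Finset.sum_range_succ] at this
        linarith
    calc c (n+1) * (∑ i ∈ range n, d i + d n)
        ≤ c n * (∑ i ∈ range n, d i + d n) := h2
      _ = c n * ∑ i ∈ range n, d i + c n * d n := by ring
      _ ≤ ∑ i ∈ range n, c i * d i + c n * d n := by linarith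

theorem maj {p : ℝ} (hp : 0 ≤ p) (a b : ℕ → ℝ) (hb : Antitone b) (m : ℕ)
    (hab : ∀ k ≤ m, ∑ i ∈ range k, b i ≤ ∑ i ∈ range k, a i) :
    ∑ i ∈ range m, gfun p (b i) ≤ ∑ i ∈ range m, gfun p (a i) := by
  have hc : Antitone (fun i => phi p (b i)) := (phi_mono hp).comp_antitone hb
  have hd : ∀ k ≤ m, 0 ≤ ∑ i ∈ range k, (a i - b i) := by
    intro k hk
    rw [Finset.sum_sub_distrib]
    linarith [hab k hk]
  have h2 : 0 ≤ ∑ i ∈ range m, phi p (b i) * (a i - b i) := by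
    have h3 := abel (fun i => phi p (b i)) (fun i => a i - b i) hc m hd
    have h4 : 0 ≤ phi p (b m) * ∑ i ∈ range m, (a i - b i) :=
      mul_nonneg (phi_nonneg hp _) (hd m le_rfl)
    linarith
  have h5 : ∑ i ∈ range m, phi p (b i) * (a i - b i)
      ≤ ∑ i ∈ range m, (gfun p (a i) - gfun p (b i)) :=
    Finset.sum_le_sum fun i _ => tangent hp (b i) (a i)
  rw [Finset.sum_sub_distrib] at h5
  linarith

theorem scalar_core {p : ℝ} (hp : 0 ≤ p) (s t : ℕ → ℝ) (ht : Antitone t)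
    (hspos : ∀ i, 0 < s i) (htpos : ∀ i, 0 < t i) (m : ℕ)
    (h : ∀ k ≤ m, ∏ i ∈ range k, t i ≤ ∏ i ∈ range k, s i) :
    ∏ i ∈ range m, (1 + t i ^ p) ≤ ∏ i ∈ range m, (1 + s i ^ p) := by
  have hb : Antitone (fun i => Real.log (t i)) := by
    intro i j hij
    exact Real.log_le_log (htpos j) (ht hij)
  have hab : ∀ k ≤ m, ∑ i ∈ range k, Real.log (t i) ≤ ∑ i ∈ range k, Real.log (s i) := by
    intro k hk
    rw [← Real.log_prod (fun i _ => ne_of_gt (htpos i)),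
      ← Real.log_prod (fun i _ => ne_of_gt (hspos i))]
    exact Real.log_le_log (Finset.prod_pos fun i _ => htpos i) (h k hk)
  have hmaj := maj hp (fun i => Real.log (s i)) (fun i => Real.log (t i)) hb m hab
  have key : ∀ (u : ℕ → ℝ), (∀ i, 0 < u i) →
      ∏ i ∈ range m, (1 + u i ^ p) = Real.exp (∑ i ∈ range m, gfun p (Real.log (u i))) := by
    intro u hu
    rw [Real.exp_sum]
    refine Finset.prod_congr rfl fun i _ => ?_
    rw [gfun, show p * Real.log (u i) = Real.log (u i) * p from mul_comm _ _,
      ← Real.rpow_def_of_pos (hu i), Real.exp_log]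
    have := Real.rpow_nonneg (le_of_lt (hu i)) p
    linarith
  rw [key t htpos, key s hspos]
  exact Real.exp_le_exp.mpr hmaj

theorem scalar_main {p : ℝ} (hp : 1 ≤ p) (s t : ℕ → ℝ) (hs : Antitone s) (ht : Antitone t)
    (hs0 : ∀ i, 0 ≤ s i) (ht0 : ∀ i, 0 ≤ t i) (N : ℕ)
    (h : ∀ k ≤ N, ∏ i ∈ range k, t i ≤ ∏ i ∈ range k, s i) :
    ∏ i ∈ range N, (1 + t i ^ p) ≤ ∏ i ∈ range N, (1 + s i ^ p) := by
  have hp0 : (0:ℝ) ≤ p := by linarith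
  have hpne : p ≠ 0 := by linarith
  have hone : ∀ (u : ℕ → ℝ), (∀ i, 0 ≤ u i) → ∀ (S : Finset ℕ), (1:ℝ) ≤ ∏ i ∈ S, (1 + u i ^ p) := by
    intro u hu S
    have h1 := Finset.prod_le_prod (s := S) (f := fun _ : ℕ => (1:ℝ)) (g := fun i => 1 + u i ^ p)
      (fun i _ => zero_le_one) (fun i _ => by
        show (1:ℝ) ≤ 1 + u i ^ p
        have := Real.rpow_nonneg (hu i) p
        linarith)
    simpa using h1
  set m := ((range N).filter (fun i => 0 < t i)).card with hm
  have hmN : m ≤ N := by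
    calc m ≤ (range N).card := Finset.card_filter_le _ _
      _ = N := Finset.card_range N
  have htpos : ∀ i, i < m → 0 < t i := by
    intro i him
    by_contra hcon
    push_neg at hcon
    have hsub : (range N).filter (fun j => 0 < t j) ⊆ range i := by
      intro j hj
      simp only [Finset.mem_filter, Finset.mem_range] at hj
      rw [Finset.mem_range]
      by_contra hji
      push_neg at hji
      exact absurd (lt_of_lt_of_le hj.2 (ht hji)) (not_lt.mpr hcon)
    have := Finset.card_le_card hsub
    rw [Finset.card_range] at this
    omega
  have htzero : ∀ i, m ≤ i → i < N → t i = 0 := by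
    intro i hmi hiN
    by_contra hcon
    have hti : 0 < t i := lt_of_le_of_ne (ht0 i) (Ne.symm hcon)
    have hsub : range (i+1) ⊆ (range N).filter (fun j => 0 < t j) := by
      intro j hj
      rw [Finset.mem_range] at hj
      simp only [Finset.mem_filter, Finset.mem_range]
      have hji : j ≤ i := by omega
      exact ⟨by omega, lt_of_lt_of_le hti (ht hji)⟩
    have := Finset.card_le_card hsub
    rw [Finset.card_range] at this
    omega
  rcases Nat.eq_zero_or_pos m with hm0 | hmpos
  · have : ∀ i ∈ range N, (1:ℝ) + t i ^ p = 1 := by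
      intro i hi
      rw [Finset.mem_range] at hi
      rw [htzero i (by omega) hi, Real.zero_rpow hpne, add_zero]
    rw [Finset.prod_congr rfl this, Finset.prod_const_one]
    exact hone s hs0 _
  · have hspos : ∀ i, i < m → 0 < s i := by
      intro i him
      by_contra hcon
      push_neg at hcon
      have hsz : s i = 0 := le_antisymm hcon (hs0 i)
      have h1 : ∏ j ∈ range (i+1), s j = 0 :=
        Finset.prod_eq_zero (Finset.mem_range.mpr (Nat.lt_succ_self i)) hsz
      have h2 : 0 < ∏ j ∈ range (i+1), t j :=
        Finset.prod_pos fun j hj => htpos j (by rw [Finset.mem_range] at hj; omega)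
      have := h (i+1) (by omega)
      rw [h1] at this
      linarith
    set s' : ℕ → ℝ := fun i => s (min i (m-1)) with hs'
    set t' : ℕ → ℝ := fun i => t (min i (m-1)) with ht'
    have hminlt : ∀ i : ℕ, min i (m-1) < m := fun i => by omega
    have hs'pos : ∀ i, 0 < s' i := fun i => hspos _ (hminlt i)
    have ht'pos : ∀ i, 0 < t' i := fun i => htpos _ (hminlt i)
    have ht'anti : Antitone t' := fun i j hij => ht (by omega)
    have hmin_eq : ∀ i, i < m → min i (m-1) = i := fun i him => by omega
    have hprod_eq : ∀ (u u' : ℕ → ℝ), (u' = fun i => u (min i (m-1))) → ∀ k ≤ m,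
        ∏ i ∈ range k, u' i = ∏ i ∈ range k, u i := by
      intro u u' hu' k hk
      refine Finset.prod_congr rfl fun i hi => ?_
      rw [Finset.mem_range] at hi
      simp only [hu', hmin_eq i (by omega)]
    have h' : ∀ k ≤ m, ∏ i ∈ range k, t' i ≤ ∏ i ∈ range k, s' i := by
      intro k hk
      rw [hprod_eq t t' rfl k hk, hprod_eq s s' rfl k hk]
      exact h k (le_trans hk hmN)
    have hcore := scalar_core hp0 s' t' ht'anti hs'pos ht'pos m h'
    have hc1 : ∏ i ∈ range m, (1 + t' i ^ p) = ∏ i ∈ range m, (1 + t i ^ p) := by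
      refine Finset.prod_congr rfl fun i hi => ?_
      rw [Finset.mem_range] at hi
      simp only [ht', hmin_eq i hi]
    have hc2 : ∏ i ∈ range m, (1 + s' i ^ p) = ∏ i ∈ range m, (1 + s i ^ p) := by
      refine Finset.prod_congr rfl fun i hi => ?_
      rw [Finset.mem_range] at hi
      simp only [hs', hmin_eq i hi]
    rw [hc1, hc2] at hcore
    have hsplit_t : ∏ i ∈ range N, (1 + t i ^ p) = ∏ i ∈ range m, (1 + t i ^ p) := by
      rw [← Finset.prod_range_mul_prod_Ico (fun i => 1 + t i ^ p) hmN]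
      have : ∀ i ∈ Finset.Ico m N, (1:ℝ) + t i ^ p = 1 := by
        intro i hi
        rw [Finset.mem_Ico] at hi
        rw [htzero i hi.1 hi.2, Real.zero_rpow hpne, add_zero]
      rw [Finset.prod_congr rfl this, Finset.prod_const_one, mul_one]
    have hsplit_s : ∏ i ∈ range m, (1 + s i ^ p) ≤ ∏ i ∈ range N, (1 + s i ^ p) := by
      rw [← Finset.prod_range_mul_prod_Ico (fun i => 1 + s i ^ p) hmN]
      have h1 : (1:ℝ) ≤ ∏ i ∈ Finset.Ico m N, (1 + s i ^ p) := hone s hs0 _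
      have h2 : (0:ℝ) ≤ ∏ i ∈ range m, (1 + s i ^ p) := by
        refine Finset.prod_nonneg fun i _ => ?_
        have := Real.rpow_nonneg (hs0 i) p
        linarith
      nlinarith
    rw [hsplit_t]
    exact le_trans hcore hsplit_s

theorem sqrt_prod (S : Finset ℕ) (f : ℕ → ℝ) (hf : ∀ i, 0 ≤ f i) :
    Real.sqrt (∏ i ∈ S, f i) = ∏ i ∈ S, Real.sqrt (f i) := by
  classical
  induction S using Finset.cons_induction with
  | empty => simp
  | cons a S ha ih =>
    rw [Finset.prod_cons, Finset.prod_cons, Real.sqrt_mul (hf a), ih]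


end scalarpart

section matrixpart
open Complex
variable {ι κ : Type*} [Fintype ι] [DecidableEq ι] [Fintype κ] [DecidableEq κ]

set_option linter.unusedSectionVars false

variable {ι κ : Type*} [Fintype ι] [DecidableEq ι] [Fintype κ] [DecidableEq κ]

theorem cb_step1 (A : Matrix κ ι ℂ) (B : Matrix ι κ ℂ) :
    det (A * B) = ∑ f : κ → ι, det (A.submatrix id f) * ∏ i, B (f i) i := by
  simp only [det_apply', mul_apply, Finset.prod_univ_sum, Fintype.piFinset_univ, Finset.mul_sum]
  rw [Finset.sum_comm]
  refine Finset.sum_congr rfl fun f _ => ?_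
  rw [Finset.sum_mul]
  refine Finset.sum_congr rfl fun σ _ => ?_
  rw [Finset.prod_mul_distrib, mul_assoc]
  rfl

theorem cb_step2 (A : Matrix κ ι ℂ) (B : Matrix ι κ ℂ) :
    det (A * B) = ∑ f ∈ univ.filter (fun f : κ → ι => Function.Injective f),
      det (A.submatrix id f) * ∏ i, B (f i) i := by
  rw [cb_step1]
  symm
  apply Finset.sum_subset (Finset.filter_subset _ _)
  intro f _ hf
  simp only [Finset.mem_filter, Finset.mem_univ, true_and] at hf
  rw [Function.not_injective_iff] at hf
  obtain ⟨i, j, hij, hne⟩ := hf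
  rw [det_zero_of_column_eq hne (fun k => by simp [hij]), zero_mul]

theorem cb (A : Matrix κ ι ℂ) (B : Matrix ι κ ℂ) :
    ((Fintype.card κ).factorial : ℂ) * det (A * B) =
      ∑ f ∈ univ.filter (fun f : κ → ι => Function.Injective f),
        det (A.submatrix id f) * det (B.submatrix f id) := by
  have expand : ∀ f : κ → ι, det (B.submatrix f id)
      = ∑ σ : Equiv.Perm κ, ((Equiv.Perm.sign σ : ℤ) : ℂ) * ∏ i, B (f (σ i)) i := by
    intro f
    rw [det_apply']
    rfl
  symm
  calc ∑ f ∈ univ.filter (fun f : κ → ι => Function.Injective f),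
        det (A.submatrix id f) * det (B.submatrix f id)
      = ∑ f ∈ univ.filter (fun f : κ → ι => Function.Injective f),
          ∑ σ : Equiv.Perm κ, ((Equiv.Perm.sign σ : ℤ) : ℂ) * det (A.submatrix id f)
            * ∏ i, B (f (σ i)) i := by
        refine Finset.sum_congr rfl fun f _ => ?_
        rw [expand, Finset.mul_sum]
        refine Finset.sum_congr rfl fun σ _ => by ring
    _ = ∑ σ : Equiv.Perm κ, ∑ f ∈ univ.filter (fun f : κ → ι => Function.Injective f),
          ((Equiv.Perm.sign σ : ℤ) : ℂ) * det (A.submatrix id f) * ∏ i, B (f (σ i)) i :=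
        Finset.sum_comm
    _ = ∑ σ : Equiv.Perm κ, ∑ g ∈ univ.filter (fun f : κ → ι => Function.Injective f),
          det (A.submatrix id g) * ∏ i, B (g i) i := by
        refine Finset.sum_congr rfl fun σ _ => ?_
        refine Finset.sum_nbij' (fun f => f ∘ σ) (fun g => g ∘ σ.symm) ?_ ?_ ?_ ?_ ?_
        · intro f hf
          simp only [Finset.mem_filter, Finset.mem_univ, true_and] at hf ⊢
          exact hf.comp σ.injective
        · intro g hg
          simp only [Finset.mem_filter, Finset.mem_univ, true_and] at hg ⊢
          exact hg.comp σ.symm.injective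
        · intro f _; ext x; simp
        · intro g _; ext x; simp
        · intro f _
          have h1 : A.submatrix id (f ∘ σ) = (A.submatrix id f).submatrix id σ := by
            ext i j; simp
          rw [h1, Matrix.det_permute' σ (A.submatrix id f)]
          push_cast
          ring_nf
          rfl
    _ = ∑ _σ : Equiv.Perm κ, det (A * B) := by
        exact Finset.sum_congr rfl fun σ _ => (cb_step2 A B).symm
    _ = ((Fintype.card κ).factorial : ℂ) * det (A * B) := by
        rw [Finset.sum_const, Finset.card_univ, Fintype.card_perm, nsmul_eq_mul]


theorem cb_pair (V W : Matrix ι κ ℂ) (d : ι → ℂ) :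
    ((Fintype.card κ).factorial : ℂ) * det (Vᴴ * (diagonal d * W)) =
      ∑ f ∈ univ.filter (fun f : κ → ι => Function.Injective f),
        (∏ i, d (f i)) * ((starRingEnd ℂ) (det (V.submatrix f id)) * det (W.submatrix f id)) := by
  rw [← Matrix.mul_assoc, cb]
  refine Finset.sum_congr rfl fun f hf => ?_
  have h1 : (Vᴴ * diagonal d).submatrix id f
      = ((V.submatrix f id)ᴴ) * diagonal (d ∘ f) := by
    ext i j
    simp [Matrix.mul_diagonal, Matrix.mul_apply, Matrix.diagonal_apply, Finset.sum_ite_eq,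
      conjTranspose_apply]
  have h2 : det ((Vᴴ * diagonal d).submatrix id f)
      = (∏ i, d (f i)) * (starRingEnd ℂ) (det (V.submatrix f id)) := by
    rw [h1, det_mul, det_conjTranspose, det_diagonal]
    simp only [Function.comp_apply, Complex.star_def]
    ring
  rw [h2, mul_assoc]

theorem sum_normSq (W : Matrix ι κ ℂ) :
    ∑ f ∈ univ.filter (fun f : κ → ι => Function.Injective f),
        (Complex.normSq (det (W.submatrix f id)) : ℝ) =
      ((Fintype.card κ).factorial : ℝ) * (det (Wᴴ * W)).re := by
  have := cb_pair W W (fun _ => 1)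
  rw [diagonal_one, Matrix.one_mul] at this
  have h2 : ∑ f ∈ univ.filter (fun f : κ → ι => Function.Injective f),
      (∏ _i : κ, (1:ℂ)) * ((starRingEnd ℂ) (det (W.submatrix f id)) * det (W.submatrix f id))
      = ((∑ f ∈ univ.filter (fun f : κ → ι => Function.Injective f),
          (Complex.normSq (det (W.submatrix f id)) : ℝ) : ℝ) : ℂ) := by
    push_cast
    refine Finset.sum_congr rfl fun f _ => ?_
    rw [Finset.prod_const_one, one_mul, Complex.normSq_eq_conj_mul_self]
  rw [h2] at this
  have := congrArg Complex.re this
  simpa using this.symm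

/-- Key compression estimate. -/
theorem compress_det_le {H : Matrix ι ι ℂ} (hH : H.IsHermitian) (V : Matrix ι κ ℂ)
    (hV : Vᴴ * V = 1) {c : ℝ} (hc : 0 ≤ c)
    (hb : ∀ f : κ → ι, Function.Injective f → ∏ j, hH.eigenvalues (f j) ≤ c) :
    (det (Vᴴ * (H * V))).re ≤ c := by
  classical
  set U : Matrix ι ι ℂ := (IsHermitian.eigenvectorUnitary hH : Matrix ι ι ℂ) with hU
  have hU2 : star U * U = 1 := by
    simpa [hU] using (unitary.star_mul_self_of_mem (IsHermitian.eigenvectorUnitary hH).2)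
  set W : Matrix ι κ ℂ := star U * V with hW
  have hWc : Wᴴ = Vᴴ * U := by
    rw [hW, conjTranspose_mul, star_eq_conjTranspose, conjTranspose_conjTranspose]
  have hWW : Wᴴ * W = 1 := by
    rw [hWc, hW, Matrix.mul_assoc, ← Matrix.mul_assoc U, 
      (Matrix.mem_unitaryGroup_iff).mp (IsHermitian.eigenvectorUnitary hH).2, Matrix.one_mul, hV]
  set d : ι → ℂ := fun i => (hH.eigenvalues i : ℝ) with hd
  have hspec : Vᴴ * (H * V) = Wᴴ * (diagonal d * W) := by
    conv_lhs => rw [hH.spectral_theorem, Unitary.conjStarAlgAut_apply]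
    rw [hWc, hW]
    simp only [Matrix.mul_assoc]
    congr 2
  have key := cb_pair W W d
  rw [← hspec] at key
  have keyre := congrArg Complex.re key
  have hLre : (((Fintype.card κ).factorial : ℂ) * det (Vᴴ * (H * V))).re
      = ((Fintype.card κ).factorial : ℝ) * (det (Vᴴ * (H * V))).re := by
    simp [Complex.mul_re]
  rw [hLre] at keyre
  have hRre : (∑ f ∈ univ.filter (fun f : κ → ι => Function.Injective f),
        (∏ i, d (f i)) * ((starRingEnd ℂ) (det (W.submatrix f id)) * det (W.submatrix f id))).re
      = ∑ f ∈ univ.filter (fun f : κ → ι => Function.Injective f),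
        (∏ j, hH.eigenvalues (f j)) * Complex.normSq (det (W.submatrix f id)) := by
    rw [Complex.re_sum]
    refine Finset.sum_congr rfl fun f _ => ?_
    have : (∏ i, d (f i)) * ((starRingEnd ℂ) (det (W.submatrix f id)) * det (W.submatrix f id))
        = (((∏ j, hH.eigenvalues (f j)) * Complex.normSq (det (W.submatrix f id)) : ℝ) : ℂ) := by
      rw [← Complex.normSq_eq_conj_mul_self]
      push_cast [hd]
      rfl
    rw [this, Complex.ofReal_re]
  rw [hRre] at keyre
  have hbound : ∑ f ∈ univ.filter (fun f : κ → ι => Function.Injective f),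
        (∏ j, hH.eigenvalues (f j)) * Complex.normSq (det (W.submatrix f id))
      ≤ ((Fintype.card κ).factorial : ℝ) * c := by
    calc ∑ f ∈ univ.filter (fun f : κ → ι => Function.Injective f),
          (∏ j, hH.eigenvalues (f j)) * Complex.normSq (det (W.submatrix f id))
        ≤ ∑ f ∈ univ.filter (fun f : κ → ι => Function.Injective f),
          c * Complex.normSq (det (W.submatrix f id)) := by
          refine Finset.sum_le_sum fun f hf => ?_
          simp only [Finset.mem_filter, Finset.mem_univ, true_and] at hf
          exact mul_le_mul_of_nonneg_right (hb f hf) (Complex.normSq_nonneg _)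
      _ = c * (((Fintype.card κ).factorial : ℝ) * (det (Wᴴ * W)).re) := by
          rw [← Finset.mul_sum, sum_normSq]
      _ = ((Fintype.card κ).factorial : ℝ) * c := by
          rw [hWW]; simp [mul_comm]
  rw [← keyre] at hbound
  have hfac : (0:ℝ) < ((Fintype.card κ).factorial : ℝ) := by positivity
  exact le_of_mul_le_mul_left hbound hfac

/-- Cauchy–Schwarz for determinants of isometry compressions. -/
theorem cs_det (U B : Matrix ι κ ℂ) (hU : Uᴴ * U = 1) :
    Complex.normSq (det (Uᴴ * B)) ≤ (det (Bᴴ * B)).re := by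
  classical
  set k : ℕ := (Fintype.card κ).factorial with hk
  have hkpos : (0:ℝ) < (k : ℝ) := by positivity
  have key := cb_pair U B (fun _ => 1)
  rw [diagonal_one, Matrix.one_mul] at key
  set I := univ.filter (fun f : κ → ι => Function.Injective f) with hI
  have habs : (k:ℝ) * ‖det (Uᴴ * B)‖
      ≤ ∑ f ∈ I, ‖det (U.submatrix f id)‖ * ‖det (B.submatrix f id)‖ := by
    have h1 : ‖((k:ℕ) : ℂ) * det (Uᴴ * B)‖ = (k:ℝ) * ‖det (Uᴴ * B)‖ := by
      rw [norm_mul, Complex.norm_natCast]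
    rw [← h1, key]
    refine (norm_sum_le _ _).trans_eq ?_
    refine Finset.sum_congr rfl fun f _ => ?_
    simp [norm_mul, Complex.norm_conj]
  have hsq : ((k:ℝ) * ‖det (Uᴴ * B)‖) ^ 2
      ≤ (∑ f ∈ I, ‖det (U.submatrix f id)‖ ^ 2)
        * (∑ f ∈ I, ‖det (B.submatrix f id)‖ ^ 2) := by
    refine le_trans (pow_le_pow_left₀ (by positivity) habs 2) ?_
    exact Finset.sum_mul_sq_le_sq_mul_sq I _ _
  have hU' : ∑ f ∈ I, ‖det (U.submatrix f id)‖ ^ 2 = (k:ℝ) := by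
    have := sum_normSq (ι := ι) (κ := κ) U
    rw [hU] at this
    simp only [← hI] at this
    calc ∑ f ∈ I, ‖det (U.submatrix f id)‖ ^ 2
        = ∑ f ∈ I, (Complex.normSq (det (U.submatrix f id)) : ℝ) := by
          refine Finset.sum_congr rfl fun f _ => Complex.sq_norm _
      _ = (k:ℝ) := by rw [this]; simp [hk]
  have hB' : ∑ f ∈ I, ‖det (B.submatrix f id)‖ ^ 2 = (k:ℝ) * (det (Bᴴ * B)).re := by
    have := sum_normSq (ι := ι) (κ := κ) B
    simp only [← hI] at this
    calc ∑ f ∈ I, ‖det (B.submatrix f id)‖ ^ 2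
        = ∑ f ∈ I, (Complex.normSq (det (B.submatrix f id)) : ℝ) := by
          refine Finset.sum_congr rfl fun f _ => Complex.sq_norm _
      _ = (k:ℝ) * (det (Bᴴ * B)).re := this
  rw [hU', hB'] at hsq
  have h2 : (k:ℝ)^2 * Complex.normSq (det (Uᴴ * B)) ≤ (k:ℝ)^2 * (det (Bᴴ * B)).re := by
    calc (k:ℝ)^2 * Complex.normSq (det (Uᴴ * B))
        = ((k:ℝ) * ‖det (Uᴴ * B)‖) ^ 2 := by
          rw [mul_pow, Complex.sq_norm]
      _ ≤ (k:ℝ) * ((k:ℝ) * (det (Bᴴ * B)).re) := hsq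
      _ = (k:ℝ)^2 * (det (Bᴴ * B)).re := by ring
  have : (0:ℝ) < (k:ℝ)^2 := by positivity
  exact le_of_mul_le_mul_left h2 this


set_option linter.unusedSectionVars false
variable {ι κ : Type*} [Fintype ι] [DecidableEq ι] [Fintype κ] [DecidableEq κ]

/-- Sorting a nonnegative finite family into an antitone sequence on `ℕ`. -/
theorem exists_sorted {N : ℕ} (hN : Fintype.card ι = N) (g : ι → ℝ) (hg : ∀ i, 0 ≤ g i) :
    ∃ (w : ℕ → ℝ) (e : Fin N ≃ ι), Antitone w ∧ (∀ i, 0 ≤ w i) ∧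
      (∀ i, N ≤ i → w i = 0) ∧ ∀ i : Fin N, g (e i) = w i := by
  classical
  let e₀ : Fin N ≃ ι := (Fintype.equivFinOfCardEq hN).symm
  let h : Fin N → ℝ := g ∘ e₀
  let σ : Equiv.Perm (Fin N) := Tuple.sort h
  have hmono : Monotone (h ∘ σ) := Tuple.monotone_sort h
  refine ⟨fun i => if hi : i < N then h (σ (Fin.rev ⟨i, hi⟩)) else 0,
    (Fin.revPerm.trans σ).trans e₀, ?_, ?_, ?_, ?_⟩
  · intro i j hij
    by_cases hj : j < N
    · have hi : i < N := lt_of_le_of_lt hij hj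
      simp only [dif_pos hi, dif_pos hj]
      exact hmono (by simp [Fin.rev_le_rev, Fin.mk_le_mk, hij])
    · simp only [dif_neg hj]
      by_cases hi : i < N
      · simp only [dif_pos hi]; exact hg _
      · simp [dif_neg hi]
  · intro i
    by_cases hi : i < N
    · simp only [dif_pos hi]; exact hg _
    · simp [dif_neg hi]
  · intro i hi
    simp [Nat.not_lt.mpr hi]
  · intro i
    simp only [Fin.is_lt, dif_pos, Equiv.trans_apply, Equiv.coe_trans]
    rfl

/-- A product of `w` over a finite subset of `Fin N` is at most the product over an initial
segment, when `w` is antitone and nonnegative. -/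
theorem prod_finset_le {N : ℕ} (w : ℕ → ℝ) (hw : Antitone w) (h0 : ∀ i, 0 ≤ w i)
    (S : Finset (Fin N)) : ∏ x ∈ S, w ↑x ≤ ∏ i ∈ range S.card, w i := by
  classical
  set k := S.card with hk
  have hcard : S.card = k := rfl
  let e := S.orderIsoOfFin hcard
  have hle : ∀ i : Fin k, (i : ℕ) ≤ ((e i : Fin N) : ℕ) := by
    intro i
    have hsm : StrictMono (fun i : Fin k => ((e i : Fin N) : ℕ)) := by
      intro a b hab
      exact_mod_cast (e.strictMono hab)
    have : ∀ m, ∀ hm : m < k, m ≤ ((e ⟨m, hm⟩ : Fin N) : ℕ) := by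
      intro m
      induction m with
      | zero => intro _; exact Nat.zero_le _
      | succ n ih =>
        intro hm
        have hn : n < k := Nat.lt_of_succ_lt hm
        have h1 := ih hn
        have h2 : ((e ⟨n, hn⟩ : Fin N) : ℕ) < ((e ⟨n+1, hm⟩ : Fin N) : ℕ) :=
          hsm (by simp [Fin.mk_lt_mk])
        omega
    simpa using this i i.2
  calc ∏ x ∈ S, w ↑x = ∏ x : {x // x ∈ S}, w ↑↑x := (Finset.prod_coe_sort S fun x => w ↑x).symm
    _ = ∏ i : Fin k, w ↑↑(e i) := (Equiv.prod_comp e.toEquiv (fun x => w ↑↑x)).symm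
    _ ≤ ∏ i : Fin k, w ↑i := by
        refine Finset.prod_le_prod (fun i _ => h0 _) fun i _ => hw (hle i)
    _ = ∏ i ∈ range k, w i := Fin.prod_univ_eq_prod_range _ _

/-- Version for subsets of an arbitrary indexing type carrying sorted data. -/
theorem prod_finset_le' {N : ℕ} (g : ι → ℝ) (w : ℕ → ℝ) (e : Fin N ≃ ι)
    (hw : Antitone w) (h0 : ∀ i, 0 ≤ w i) (hwe : ∀ i : Fin N, g (e i) = w i)
    (S : Finset ι) : ∏ x ∈ S, g x ≤ ∏ i ∈ range S.card, w i := by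
  classical
  have himg : ∏ x ∈ S, g x = ∏ x ∈ S.image e.symm, w ↑x := by
    rw [Finset.prod_image (fun a _ b _ h => e.symm.injective h)]
    refine Finset.prod_congr rfl fun x _ => ?_
    rw [← hwe (e.symm x), Equiv.apply_symm_apply]
  rw [himg, ← Finset.card_image_of_injective S e.symm.injective]
  exact prod_finset_le w hw h0 _

theorem prod_inj_le {N : ℕ} (g : ι → ℝ) (w : ℕ → ℝ) (e : Fin N ≃ ι)
    (hw : Antitone w) (h0 : ∀ i, 0 ≤ w i) (hwe : ∀ i : Fin N, g (e i) = w i)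
    (f : κ → ι) (hf : Function.Injective f) :
    ∏ j, g (f j) ≤ ∏ i ∈ range (Fintype.card κ), w i := by
  classical
  have h1 : ∏ j, g (f j) = ∏ x ∈ univ.image f, g x := by
    rw [Finset.prod_image (fun a _ b _ h => hf h)]
  have h2 : (univ.image f).card = Fintype.card κ := by
    rw [Finset.card_image_of_injective _ hf, Finset.card_univ]
  rw [h1, ← h2]
  exact prod_finset_le' g w e hw h0 hwe _

theorem det_one_add_cfc {A : Matrix ι ι ℂ} (hA : A.IsHermitian) (f : ℝ → ℝ) :
    (1 + hA.cfc f).det = ∏ i, ((1:ℂ) + (f (hA.eigenvalues i) : ℝ)) := by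
  set U : Matrix ι ι ℂ := (IsHermitian.eigenvectorUnitary hA : Matrix ι ι ℂ) with hU
  have hU1 : U * star U = 1 := (Matrix.mem_unitaryGroup_iff).mp (IsHermitian.eigenvectorUnitary hA).2
  have key : 1 + hA.cfc f = U * (1 + diagonal (RCLike.ofReal ∘ f ∘ hA.eigenvalues)) * star U := by
    rw [Matrix.mul_add, Matrix.add_mul, Matrix.mul_one, hU1, IsHermitian.cfc, Unitary.conjStarAlgAut_apply]
  have hdet : (1 + hA.cfc f).det = ((1 + diagonal (RCLike.ofReal ∘ f ∘ hA.eigenvalues) : Matrix ι ι ℂ)).det := by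
    rw [key, det_mul, det_mul]
    have h2 : det U * det (1 + diagonal (RCLike.ofReal ∘ f ∘ hA.eigenvalues)) * det (star U)
        = det (1 + diagonal (RCLike.ofReal ∘ f ∘ hA.eigenvalues)) * (det U * det (star U)) := by
      ring
    rw [h2, ← det_mul, hU1, det_one, mul_one]
  rw [hdet]
  have : (1 : Matrix ι ι ℂ) + diagonal (RCLike.ofReal ∘ f ∘ hA.eigenvalues)
      = diagonal (fun i => (1:ℂ) + (f (hA.eigenvalues i) : ℝ)) := by
    rw [← diagonal_one, diagonal_add]
    rfl
  rw [this, det_diagonal]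

theorem det_one_add_cfc_re {A : Matrix ι ι ℂ} (hA : A.IsHermitian) (f : ℝ → ℝ) :
    (1 + hA.cfc f).det.re = ∏ i, (1 + f (hA.eigenvalues i)) := by
  rw [det_one_add_cfc hA f]
  have : ∏ i, ((1:ℂ) + (f (hA.eigenvalues i) : ℝ))
      = ((∏ i, (1 + f (hA.eigenvalues i)) : ℝ) : ℂ) := by
    push_cast
    rfl
  rw [this, Complex.ofReal_re]

/-- Construction of isometries realizing top singular values. -/
theorem exists_isometry {N : ℕ} (M : Matrix ι ι ℂ) (w : ℕ → ℝ) (e : Fin N ≃ ι)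
    (hwe : ∀ i : Fin N, (posSemidef_conjTranspose_mul_self M).1.eigenvalues (e i) = w i)
    (a : ℕ) (ha : a ≤ N) (hpos : ∀ i, i < a → 0 < w i) :
    ∃ U V : Matrix ι (Fin a) ℂ, Uᴴ * U = 1 ∧ Vᴴ * V = 1 ∧
      Uᴴ * (M * V) = diagonal (fun i : Fin a => ((Real.sqrt (w ↑i) : ℝ) : ℂ)) := by
  classical
  set hH := (posSemidef_conjTranspose_mul_self M).1 with hhH
  set U0 : Matrix ι ι ℂ := (IsHermitian.eigenvectorUnitary hH : Matrix ι ι ℂ) with hU0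
  have hU0star : star U0 * U0 = 1 := Unitary.star_mul_self_of_mem (IsHermitian.eigenvectorUnitary hH).2
  set dd : ι → ℂ := fun i => (hH.eigenvalues i : ℝ) with hdd
  have hAU : (Mᴴ * M) * U0 = U0 * diagonal dd := by
    conv_lhs => rw [hH.spectral_theorem, Unitary.conjStarAlgAut_apply]
    rw [Matrix.mul_assoc, Matrix.mul_assoc, hU0star, Matrix.mul_one]
    rfl
  set c : Fin a → ι := fun i => e ⟨(i : ℕ), lt_of_lt_of_le i.2 ha⟩ with hc
  have hcinj : Function.Injective c := by
    intro i j hij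
    have := e.injective hij
    rw [Fin.mk.injEq] at this
    exact Fin.ext this
  set V : Matrix ι (Fin a) ℂ := U0.submatrix id c with hV
  have hVV : Vᴴ * V = 1 := by
    ext i j
    simp only [hV, Matrix.mul_apply, conjTranspose_apply, submatrix_apply, id_eq]
    have : ∑ x, star (U0 x (c i)) * U0 x (c j) = (star U0 * U0) (c i) (c j) := by
      simp [Matrix.mul_apply, Matrix.star_apply]
    rw [this, hU0star, Matrix.one_apply, Matrix.one_apply]
    simp [hcinj.eq_iff]
  have hMV : Mᴴ * (M * V) = V * diagonal (dd ∘ c) := by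
    ext i j
    have h1 : (Mᴴ * (M * V)) i j = ((Mᴴ * M) * U0) i (c j) := by
      rw [← Matrix.mul_assoc]
      simp only [Matrix.mul_apply, hV, submatrix_apply, id_eq]
    rw [h1, hAU]
    simp only [Matrix.mul_diagonal, hV, submatrix_apply, id_eq, Function.comp_apply]
  have hVMV : Vᴴ * (Mᴴ * (M * V)) = diagonal (dd ∘ c) := by
    rw [hMV, ← Matrix.mul_assoc, hVV, Matrix.one_mul]
  have hwc : ∀ i : Fin a, dd (c i) = ((w ↑i : ℝ) : ℂ) := by
    intro i
    rw [hdd]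
    simp only
    rw [hwe ⟨(i : ℕ), lt_of_lt_of_le i.2 ha⟩]
  set gv : Fin a → ℂ := fun i => ((Real.sqrt (w ↑i))⁻¹ : ℝ) with hgv
  set Uu : Matrix ι (Fin a) ℂ := M * (V * diagonal gv) with hUu
  have hstar : star gv = gv := by
    funext i
    show star (gv i) = gv i
    have h2 : gv i = (((Real.sqrt (w ↑i))⁻¹ : ℝ) : ℂ) := rfl
    simp [h2, Complex.star_def, Complex.conj_ofReal]
  have hUuT : Uuᴴ = diagonal gv * (Vᴴ * Mᴴ) := by
    rw [hUu, conjTranspose_mul, conjTranspose_mul, diagonal_conjTranspose, hstar, Matrix.mul_assoc]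
  have hMVg : Mᴴ * (M * (V * diagonal gv)) = V * diagonal (dd ∘ c) * diagonal gv := by
    have : M * (V * diagonal gv) = (M * V) * diagonal gv := by rw [Matrix.mul_assoc]
    rw [this, show Mᴴ * ((M * V) * diagonal gv) = (Mᴴ * (M * V)) * diagonal gv from
      (Matrix.mul_assoc _ _ _).symm, hMV]
  refine ⟨Uu, V, ?_, hVV, ?_⟩
  · rw [show Uuᴴ * Uu = Uuᴴ * Uu from rfl, hUuT, hUu, Matrix.mul_assoc, Matrix.mul_assoc, hMVg]
    rw [show Vᴴ * (V * diagonal (dd ∘ c) * diagonal gv) = (Vᴴ * V) * (diagonal (dd ∘ c) * diagonal gv) from by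
      rw [Matrix.mul_assoc, Matrix.mul_assoc], hVV, Matrix.one_mul, diagonal_mul_diagonal,
      diagonal_mul_diagonal]
    have : (fun i => gv i * ((dd ∘ c) i * gv i)) = fun _ => (1:ℂ) := by
      funext i
      have hw := hpos i i.2
      have h1 : (dd ∘ c) i = ((w ↑i : ℝ) : ℂ) := hwc i
      have h2 : gv i = (((Real.sqrt (w ↑i))⁻¹ : ℝ) : ℂ) := rfl
      have hreal : (Real.sqrt (w ↑i))⁻¹ * (w ↑i * (Real.sqrt (w ↑i))⁻¹) = 1 := by
        rw [show w (↑i:ℕ) = Real.sqrt (w ↑i) * Real.sqrt (w ↑i) from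
          (Real.mul_self_sqrt (le_of_lt hw)).symm]
        have hne : Real.sqrt (w ↑i) ≠ 0 := ne_of_gt (Real.sqrt_pos.mpr hw)
        field_simp
        rw [Real.sqrt_sq (Real.sqrt_nonneg _)]
      rw [h1, h2, ← Complex.ofReal_mul, ← Complex.ofReal_mul, hreal, Complex.ofReal_one]
    rw [this, diagonal_one]
  · rw [hUuT, Matrix.mul_assoc, show Vᴴ * Mᴴ * (M * V) = Vᴴ * (Mᴴ * (M * V)) from
      Matrix.mul_assoc _ _ _, hVMV, diagonal_mul_diagonal]
    have heq : (fun i => gv i * dd (c i)) = (fun i : Fin a => ((Real.sqrt (w ↑i) : ℝ) : ℂ)) := by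
      funext i
      have hw := hpos i i.2
      have h2 : gv i = (((Real.sqrt (w ↑i))⁻¹ : ℝ) : ℂ) := rfl
      have hreal : (Real.sqrt (w ↑i))⁻¹ * w ↑i = Real.sqrt (w ↑i) := by
        rw [show w (↑i:ℕ) = Real.sqrt (w ↑i) * Real.sqrt (w ↑i) from
          (Real.mul_self_sqrt (le_of_lt hw)).symm]
        have hne : Real.sqrt (w ↑i) ≠ 0 := ne_of_gt (Real.sqrt_pos.mpr hw)
        field_simp
        rw [Real.sqrt_sq (Real.sqrt_nonneg _)]
      rw [hwc i, h2, ← Complex.ofReal_mul, hreal]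
    rw [show (fun i => gv i * (dd ∘ c) i) = (fun i => gv i * dd (c i)) from rfl, heq]


end matrixpart

section blockpart

theorem block_ineq {r s : ℕ} (X : Matrix (Fin r) (Fin r) ℂ) (Y : Matrix (Fin r) (Fin s) ℂ)
    (Z : Matrix (Fin s) (Fin s) ℂ)
    (wX wZ wT : ℕ → ℝ) (eX : Fin r ≃ Fin r) (eZ : Fin s ≃ Fin s)
    (eT : Fin (r+s) ≃ (Fin r ⊕ Fin s))
    (hwX : ∀ i : Fin r, (posSemidef_conjTranspose_mul_self X).1.eigenvalues (eX i) = wX i)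
    (hwZ : ∀ i : Fin s, (posSemidef_conjTranspose_mul_self Z).1.eigenvalues (eZ i) = wZ i)
    (hwT : ∀ i : Fin (r+s),
      (posSemidef_conjTranspose_mul_self (fromBlocks X Y 0 Z)).1.eigenvalues (eT i) = wT i)
    (hTanti : Antitone wT) (hT0 : ∀ i, 0 ≤ wT i)
    (hX0 : ∀ i, 0 ≤ wX i) (hZ0 : ∀ i, 0 ≤ wZ i)
    (a b : ℕ) (ha : a ≤ r) (hb : b ≤ s) :
    (∏ i ∈ Finset.range a, wX i) * (∏ i ∈ Finset.range b, wZ i)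
      ≤ ∏ i ∈ Finset.range (a+b), wT i := by
  classical
  by_cases h0 : (∏ i ∈ Finset.range a, wX i) * (∏ i ∈ Finset.range b, wZ i) = 0
  · rw [h0]
    exact Finset.prod_nonneg fun i _ => hT0 i
  · have hXne : ∏ i ∈ Finset.range a, wX i ≠ 0 := fun h => h0 (by rw [h, zero_mul])
    have hZne : ∏ i ∈ Finset.range b, wZ i ≠ 0 := fun h => h0 (by rw [h, mul_zero])
    have hXpos : ∀ i, i < a → 0 < wX i := by
      intro i hi
      rcases lt_or_eq_of_le (hX0 i) with h | h
      · exact h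
      · exact absurd (Finset.prod_eq_zero (Finset.mem_range.mpr hi) h.symm) hXne
    have hZpos : ∀ i, i < b → 0 < wZ i := by
      intro i hi
      rcases lt_or_eq_of_le (hZ0 i) with h | h
      · exact h
      · exact absurd (Finset.prod_eq_zero (Finset.mem_range.mpr hi) h.symm) hZne
    obtain ⟨UX, VX, hUXU, hVXV, hXd⟩ := exists_isometry X wX eX hwX a ha hXpos
    obtain ⟨UZ, VZ, hUZU, hVZV, hZd⟩ := exists_isometry Z wZ eZ hwZ b hb hZpos
    set T : Matrix (Fin r ⊕ Fin s) (Fin r ⊕ Fin s) ℂ := fromBlocks X Y 0 Z with hTdef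
    set V : Matrix (Fin r ⊕ Fin s) (Fin a ⊕ Fin b) ℂ := fromBlocks VX 0 0 VZ with hVdef
    set U : Matrix (Fin r ⊕ Fin s) (Fin a ⊕ Fin b) ℂ := fromBlocks UX 0 0 UZ with hUdef
    have hVc : Vᴴ = fromBlocks VXᴴ 0 0 VZᴴ := by
      rw [hVdef, fromBlocks_conjTranspose]
      simp
    have hUc : Uᴴ = fromBlocks UXᴴ 0 0 UZᴴ := by
      rw [hUdef, fromBlocks_conjTranspose]
      simp
    have hVV : Vᴴ * V = 1 := by
      rw [hVc, hVdef, fromBlocks_multiply]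
      simp [hVXV, hVZV, fromBlocks_one]
    have hUU : Uᴴ * U = 1 := by
      rw [hUc, hUdef, fromBlocks_multiply]
      simp [hUXU, hUZU, fromBlocks_one]
    have hTV : T * V = fromBlocks (X * VX) (Y * VZ) 0 (Z * VZ) := by
      rw [hTdef, hVdef, fromBlocks_multiply]
      simp
    have hUTV : Uᴴ * (T * V)
        = fromBlocks (UXᴴ * (X * VX)) (UXᴴ * (Y * VZ)) 0 (UZᴴ * (Z * VZ)) := by
      rw [hUc, hTV, fromBlocks_multiply]
      simp
    have hdet : det (Uᴴ * (T * V))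
        = ((∏ i ∈ Finset.range a, Real.sqrt (wX i) : ℝ) : ℂ)
          * ((∏ i ∈ Finset.range b, Real.sqrt (wZ i) : ℝ) : ℂ) := by
      rw [hUTV, hXd, hZd, det_fromBlocks_zero₂₁, det_diagonal, det_diagonal]
      rw [← Complex.ofReal_prod, ← Complex.ofReal_prod]
      rw [Fin.prod_univ_eq_prod_range (fun i => Real.sqrt (wX i)) a,
        Fin.prod_univ_eq_prod_range (fun i => Real.sqrt (wZ i)) b]
    have hnsq : Complex.normSq (det (Uᴴ * (T * V)))
        = (∏ i ∈ Finset.range a, wX i) * (∏ i ∈ Finset.range b, wZ i) := by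
      rw [hdet, ← Complex.ofReal_mul, Complex.normSq_ofReal]
      have hxx : (∏ i ∈ Finset.range a, Real.sqrt (wX i)) * (∏ i ∈ Finset.range a, Real.sqrt (wX i))
          = ∏ i ∈ Finset.range a, wX i := by
        rw [← Finset.prod_mul_distrib]
        exact Finset.prod_congr rfl fun i _ => Real.mul_self_sqrt (hX0 i)
      have hzz : (∏ i ∈ Finset.range b, Real.sqrt (wZ i)) * (∏ i ∈ Finset.range b, Real.sqrt (wZ i))
          = ∏ i ∈ Finset.range b, wZ i := by
        rw [← Finset.prod_mul_distrib]
        exact Finset.prod_congr rfl fun i _ => Real.mul_self_sqrt (hZ0 i)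
      calc ((∏ i ∈ Finset.range a, Real.sqrt (wX i)) * ∏ i ∈ Finset.range b, Real.sqrt (wZ i))
            * ((∏ i ∈ Finset.range a, Real.sqrt (wX i)) * ∏ i ∈ Finset.range b, Real.sqrt (wZ i))
          = ((∏ i ∈ Finset.range a, Real.sqrt (wX i)) * (∏ i ∈ Finset.range a, Real.sqrt (wX i)))
            * ((∏ i ∈ Finset.range b, Real.sqrt (wZ i))
              * (∏ i ∈ Finset.range b, Real.sqrt (wZ i))) := by ring
        _ = _ := by rw [hxx, hzz]
    have hcs := cs_det U (T * V) hUU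
    have hBB : (T * V)ᴴ * (T * V) = Vᴴ * ((Tᴴ * T) * V) := by
      rw [conjTranspose_mul, Matrix.mul_assoc, Matrix.mul_assoc]
    have hcomp : (det (Vᴴ * ((Tᴴ * T) * V))).re ≤ ∏ i ∈ Finset.range (a+b), wT i := by
      refine compress_det_le (posSemidef_conjTranspose_mul_self T).1 V hVV
        (Finset.prod_nonneg fun i _ => hT0 i) ?_
      intro f hf
      have := prod_inj_le ((posSemidef_conjTranspose_mul_self T).1.eigenvalues) wT eT
        hTanti hT0 hwT f hf
      rwa [show Fintype.card (Fin a ⊕ Fin b) = a + b by simp] at this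
    rw [hBB] at hcs
    rw [← hnsq]
    exact le_trans hcs hcomp

end blockpart

end StmtAux

theorem stmt_11 (r s : ℕ) (X : Matrix (Fin r) (Fin r) ℂ) (Y : Matrix (Fin r) (Fin s) ℂ)
    (Z : Matrix (Fin s) (Fin s) ℂ) (T : Matrix (Fin r ⊕ Fin s) (Fin r ⊕ Fin s) ℂ)
    (hT : T = Matrix.fromBlocks X Y 0 Z) (p : ℝ) (hp : 1 ≤ p) :
    ((1 + absPow T p).det).re ≥ ((1 + absPow X p).det).re * ((1 + absPow Z p).det).re := by
  classical
  subst hT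
  unfold absPow
  obtain ⟨wT, eT, hTanti, hT0, hTzero, hTw⟩ := StmtAux.exists_sorted
    (show Fintype.card (Fin r ⊕ Fin s) = r + s by simp)
    ((Matrix.posSemidef_conjTranspose_mul_self (Matrix.fromBlocks X Y 0 Z)).1.eigenvalues)
    (fun i => (Matrix.posSemidef_conjTranspose_mul_self _).eigenvalues_nonneg i)
  obtain ⟨wX, eX, hXanti, hX0, hXzero, hXw⟩ := StmtAux.exists_sorted
    (show Fintype.card (Fin r) = r by simp)
    ((Matrix.posSemidef_conjTranspose_mul_self X).1.eigenvalues)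
    (fun i => (Matrix.posSemidef_conjTranspose_mul_self _).eigenvalues_nonneg i)
  obtain ⟨wZ, eZ, hZanti, hZ0, hZzero, hZw⟩ := StmtAux.exists_sorted
    (show Fintype.card (Fin s) = s by simp)
    ((Matrix.posSemidef_conjTranspose_mul_self Z).1.eigenvalues)
    (fun i => (Matrix.posSemidef_conjTranspose_mul_self _).eigenvalues_nonneg i)
  obtain ⟨wV, eV, hVanti, hV0, hVzero, hVw⟩ := StmtAux.exists_sorted
    (show Fintype.card (Fin r ⊕ Fin s) = r + s by simp)
    (Sum.elim ((Matrix.posSemidef_conjTranspose_mul_self X).1.eigenvalues)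
      ((Matrix.posSemidef_conjTranspose_mul_self Z).1.eigenvalues))
    (fun i => by
      cases i with
      | inl u => exact (Matrix.posSemidef_conjTranspose_mul_self X).eigenvalues_nonneg u
      | inr v => exact (Matrix.posSemidef_conjTranspose_mul_self Z).eigenvalues_nonneg v)
  have hmaj : ∀ k, k ≤ r + s →
      ∏ i ∈ Finset.range k, wV i ≤ ∏ i ∈ Finset.range k, wT i := by
    intro k hk
    set fk : Fin k → (Fin r ⊕ Fin s) := fun i => eV ⟨(i:ℕ), by omega⟩ with hfk
    have hfkinj : Function.Injective fk := by
      intro i j hij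
      have := eV.injective hij
      rw [Fin.mk.injEq] at this
      exact Fin.ext this
    set S := Finset.univ.image fk with hS
    have hScard : S.card = k := by
      rw [hS, Finset.card_image_of_injective _ hfkinj, Finset.card_univ, Fintype.card_fin]
    have h1 : ∏ i ∈ Finset.range k, wV i
        = ∏ x ∈ S, Sum.elim ((Matrix.posSemidef_conjTranspose_mul_self X).1.eigenvalues)
            ((Matrix.posSemidef_conjTranspose_mul_self Z).1.eigenvalues) x := by
      rw [hS, Finset.prod_image (fun a _ b _ h => hfkinj h),
        ← Fin.prod_univ_eq_prod_range wV k]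
      exact Finset.prod_congr rfl fun i _ => (hVw ⟨(i:ℕ), by omega⟩).symm
    set SX := Finset.univ.filter (fun x : Fin r => (Sum.inl x : Fin r ⊕ Fin s) ∈ S) with hSX
    set SZ := Finset.univ.filter (fun x : Fin s => (Sum.inr x : Fin r ⊕ Fin s) ∈ S) with hSZ
    have hsplit : S = SX.map ⟨Sum.inl, Sum.inl_injective⟩ ∪ SZ.map ⟨Sum.inr, Sum.inr_injective⟩ := by
      ext x
      cases x with
      | inl u => simp [hSX, hSZ]
      | inr v => simp [hSX, hSZ]
    have hdisj : Disjoint (SX.map ⟨Sum.inl, Sum.inl_injective⟩)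
        (SZ.map ⟨Sum.inr, Sum.inr_injective⟩) := by
      rw [Finset.disjoint_left]
      rintro x hx hx'
      obtain ⟨u, _, rfl⟩ := Finset.mem_map.mp hx
      obtain ⟨v, _, hv⟩ := Finset.mem_map.mp hx'
      exact absurd hv (by simp)
    have hprod : ∏ x ∈ S, Sum.elim ((Matrix.posSemidef_conjTranspose_mul_self X).1.eigenvalues)
            ((Matrix.posSemidef_conjTranspose_mul_self Z).1.eigenvalues) x
        = (∏ u ∈ SX, (Matrix.posSemidef_conjTranspose_mul_self X).1.eigenvalues u)
          * ∏ v ∈ SZ, (Matrix.posSemidef_conjTranspose_mul_self Z).1.eigenvalues v := by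
      rw [hsplit, Finset.prod_union hdisj, Finset.prod_map, Finset.prod_map]
      simp
    have hcards : SX.card + SZ.card = k := by
      rw [← hScard, hsplit, Finset.card_union_of_disjoint hdisj, Finset.card_map, Finset.card_map]
    have hb1 : ∏ u ∈ SX, (Matrix.posSemidef_conjTranspose_mul_self X).1.eigenvalues u
        ≤ ∏ i ∈ Finset.range SX.card, wX i :=
      StmtAux.prod_finset_le' _ wX eX hXanti hX0 hXw SX
    have hb2 : ∏ v ∈ SZ, (Matrix.posSemidef_conjTranspose_mul_self Z).1.eigenvalues v
        ≤ ∏ i ∈ Finset.range SZ.card, wZ i :=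
      StmtAux.prod_finset_le' _ wZ eZ hZanti hZ0 hZw SZ
    have hXcard : SX.card ≤ r := by
      rw [hSX]
      exact le_trans (Finset.card_filter_le _ _) (by simp)
    have hZcard : SZ.card ≤ s := by
      rw [hSZ]
      exact le_trans (Finset.card_filter_le _ _) (by simp)
    have hblock := StmtAux.block_ineq X Y Z wX wZ wT eX eZ eT hXw hZw hTw hTanti hT0 hX0 hZ0
      SX.card SZ.card hXcard hZcard
    calc ∏ i ∈ Finset.range k, wV i
        = ∏ x ∈ S, Sum.elim ((Matrix.posSemidef_conjTranspose_mul_self X).1.eigenvalues)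
            ((Matrix.posSemidef_conjTranspose_mul_self Z).1.eigenvalues) x := h1
      _ = (∏ u ∈ SX, (Matrix.posSemidef_conjTranspose_mul_self X).1.eigenvalues u)
          * ∏ v ∈ SZ, (Matrix.posSemidef_conjTranspose_mul_self Z).1.eigenvalues v := hprod
      _ ≤ (∏ i ∈ Finset.range SX.card, wX i) * ∏ i ∈ Finset.range SZ.card, wZ i := by
          refine mul_le_mul hb1 hb2 (Finset.prod_nonneg fun v _ =>
              (Matrix.posSemidef_conjTranspose_mul_self Z).eigenvalues_nonneg v)
            (Finset.prod_nonneg fun i _ => hX0 i)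
      _ ≤ ∏ i ∈ Finset.range (SX.card + SZ.card), wT i := hblock
      _ = ∏ i ∈ Finset.range k, wT i := by rw [hcards]
  have hLHS : ((1 + ((Matrix.posSemidef_conjTranspose_mul_self
        (Matrix.fromBlocks X Y 0 Z)).1.cfc (fun x => Real.sqrt x ^ p))).det).re
      = ∏ i ∈ Finset.range (r+s), (1 + Real.sqrt (wT i) ^ p) := by
    rw [StmtAux.det_one_add_cfc_re _ (fun x => Real.sqrt x ^ p)]
    rw [← Equiv.prod_comp eT (fun i => 1 + Real.sqrt
      ((Matrix.posSemidef_conjTranspose_mul_self (Matrix.fromBlocks X Y 0 Z)).1.eigenvalues i) ^ p)]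
    rw [← Fin.prod_univ_eq_prod_range (fun i => 1 + Real.sqrt (wT i) ^ p) (r+s)]
    exact Finset.prod_congr rfl fun i _ => by rw [hTw i]
  have hRHSX : ((1 + ((Matrix.posSemidef_conjTranspose_mul_self X).1.cfc
        (fun x => Real.sqrt x ^ p))).det).re
      = ∏ i : Fin r, (1 + Real.sqrt
          ((Matrix.posSemidef_conjTranspose_mul_self X).1.eigenvalues i) ^ p) :=
    StmtAux.det_one_add_cfc_re _ (fun x => Real.sqrt x ^ p)
  have hRHSZ : ((1 + ((Matrix.posSemidef_conjTranspose_mul_self Z).1.cfc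
        (fun x => Real.sqrt x ^ p))).det).re
      = ∏ i : Fin s, (1 + Real.sqrt
          ((Matrix.posSemidef_conjTranspose_mul_self Z).1.eigenvalues i) ^ p) :=
    StmtAux.det_one_add_cfc_re _ (fun x => Real.sqrt x ^ p)
  have hRHS : (∏ i : Fin r, (1 + Real.sqrt
          ((Matrix.posSemidef_conjTranspose_mul_self X).1.eigenvalues i) ^ p))
        * ∏ i : Fin s, (1 + Real.sqrt
          ((Matrix.posSemidef_conjTranspose_mul_self Z).1.eigenvalues i) ^ p)
      = ∏ i ∈ Finset.range (r+s), (1 + Real.sqrt (wV i) ^ p) := by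
    have e1 := (Fintype.prod_sum_type (fun x : Fin r ⊕ Fin s => 1 + Real.sqrt
      (Sum.elim ((Matrix.posSemidef_conjTranspose_mul_self X).1.eigenvalues)
        ((Matrix.posSemidef_conjTranspose_mul_self Z).1.eigenvalues) x) ^ p)).symm
    rw [show (∏ i : Fin r, (1 + Real.sqrt
          ((Matrix.posSemidef_conjTranspose_mul_self X).1.eigenvalues i) ^ p))
        * ∏ i : Fin s, (1 + Real.sqrt
          ((Matrix.posSemidef_conjTranspose_mul_self Z).1.eigenvalues i) ^ p)
      = ∏ x : Fin r ⊕ Fin s, (1 + Real.sqrt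
      (Sum.elim ((Matrix.posSemidef_conjTranspose_mul_self X).1.eigenvalues)
        ((Matrix.posSemidef_conjTranspose_mul_self Z).1.eigenvalues) x) ^ p) from e1]
    rw [← Equiv.prod_comp eV (fun x => 1 + Real.sqrt
      (Sum.elim ((Matrix.posSemidef_conjTranspose_mul_self X).1.eigenvalues)
        ((Matrix.posSemidef_conjTranspose_mul_self Z).1.eigenvalues) x) ^ p)]
    rw [← Fin.prod_univ_eq_prod_range (fun i => 1 + Real.sqrt (wV i) ^ p) (r+s)]
    exact Finset.prod_congr rfl fun i _ => by rw [hVw i]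
  rw [hLHS, hRHSX, hRHSZ, hRHS]
  have final := StmtAux.scalar_main hp (fun i => Real.sqrt (wT i)) (fun i => Real.sqrt (wV i))
    (fun i j hij => Real.sqrt_le_sqrt (hTanti hij)) (fun i j hij => Real.sqrt_le_sqrt (hVanti hij))
    (fun i => Real.sqrt_nonneg _) (fun i => Real.sqrt_nonneg _) (r+s)
    (fun k hk => by
      rw [← StmtAux.sqrt_prod _ _ (fun i => hV0 i), ← StmtAux.sqrt_prod _ _ (fun i => hT0 i)]
      exact Real.sqrt_le_sqrt (hmaj k hk))
  exact final
end
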